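/- arXiv:1407.8128 — 9 statements merged into one kernel-verified Lean document; each statement's English description precedes it below -/
import Mathlib

section
/- Let p ≥ 7 be a prime. Then it is NOT the case that Γ(A_{p+1}) = Γ(A_p) if and only if there exist distinct primes r and s such that p + 1 = r + s. Here A_n denotes the alternating group alternatingGroup (Fin n). -/
private lemma prime_dvd_lcm_multiset {r : ℕ} (hr : r.Prime) :
    ∀ {m : Multiset ℕ}, r ∣ m.lcm → ∃ a ∈ m, r ∣ a := by
  intro m
  induction m using Multiset.induction_on with
  | empty =>
      intro h
      simp only [Multiset.lcm_zero] at h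
      exact absurd (Nat.le_of_dvd one_pos h) (by have := hr.two_le; omega)
  | cons a m ih =>
      intro h
      rw [Multiset.lcm_cons] at h
      have h' : r ∣ a * m.lcm := h.trans (Nat.lcm_dvd_mul a m.lcm)
      rcases (Nat.Prime.dvd_mul hr).mp h' with h1 | h2
      · exact ⟨a, Multiset.mem_cons_self a m, h1⟩
      · obtain ⟨b, hb, hrb⟩ := ih h2
        exact ⟨b, Multiset.mem_cons_of_mem hb, hrb⟩

private lemma exists_alt_orderOf {n : ℕ} (m : Multiset ℕ) (hsum : m.sum ≤ n)
    (h2 : ∀ a ∈ m, 2 ≤ a) (hpar : Even (m.sum + Multiset.card m)) :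
    ∃ x : alternatingGroup (Fin n), orderOf x = m.lcm := by
  obtain ⟨g, hg⟩ := (Equiv.Perm.exists_with_cycleType_iff (Fin n)).mpr
    ⟨by simpa using hsum, h2⟩
  have hsign : Equiv.Perm.sign g = 1 := by
    rw [Equiv.Perm.sign_of_cycleType, hg]
    exact hpar.neg_one_pow
  refine ⟨⟨g, Equiv.Perm.mem_alternatingGroup.mpr hsign⟩, ?_⟩
  rw [Subgroup.orderOf_mk, ← Equiv.Perm.lcm_cycleType, hg]

/-- Minimal support of an element of order `r*s`. -/
private lemma sum_ge_add {m : Multiset ℕ} {r s : ℕ} (hr : r.Prime) (hs : s.Prime)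
    (hrs : r ≠ s) (h : m.lcm = r * s) (h2 : ∀ a ∈ m, 1 ≤ a) : r + s ≤ m.sum := by
  have hra : r ∣ m.lcm := h ▸ dvd_mul_right r s
  have hsb : s ∣ m.lcm := h ▸ dvd_mul_left s r
  obtain ⟨a, ham, hra⟩ := prime_dvd_lcm_multiset hr hra
  obtain ⟨b, hbm, hsb⟩ := prime_dvd_lcm_multiset hs hsb
  by_cases hab : a = b
  · subst hab
    have hco : Nat.Coprime r s := (Nat.coprime_primes hr hs).mpr hrs
    have hdvd : r * s ∣ a := hco.mul_dvd_of_dvd_of_dvd hra hsb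
    have ha1 : 1 ≤ a := h2 a ham
    have hle : r * s ≤ a := Nat.le_of_dvd (by omega) hdvd
    have h1 : a ≤ m.sum := Multiset.single_le_sum (fun x _ => Nat.zero_le x) a ham
    have := Nat.add_le_mul hr.two_le hs.two_le
    omega
  · have hb' : b ∈ m.erase a := (Multiset.mem_erase_of_ne (Ne.symm hab)).mpr hbm
    have hsum : a + (m.erase a).sum = m.sum := by
      rw [← Multiset.sum_cons, Multiset.cons_erase ham]
    have h1 : b ≤ (m.erase a).sum :=
      Multiset.single_le_sum (fun x _ => Nat.zero_le x) b hb'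
    have h2a : r ≤ a := Nat.le_of_dvd (by have := h2 a ham; omega) hra
    have h2b : s ≤ b := Nat.le_of_dvd (by have := h2 b hbm; omega) hsb
    omega

private lemma dvd_two_mul_prime {s a : ℕ} (hs : s.Prime) (hs2 : s ≠ 2)
    (ha : a ∣ 2 * s) (ha2 : 2 ≤ a) : a = 2 ∨ a = s ∨ a = 2 * s := by
  by_cases h2 : 2 ∣ a
  · by_cases hsa : s ∣ a
    · right; right
      have hco : Nat.Coprime 2 s := (Nat.coprime_primes Nat.prime_two hs).mpr (Ne.symm hs2)
      exact Nat.dvd_antisymm ha (hco.mul_dvd_of_dvd_of_dvd h2 hsa)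
    · left
      obtain ⟨k, rfl⟩ := h2
      have hk : k ∣ s := (mul_dvd_mul_iff_left (by norm_num : (2:ℕ) ≠ 0)).mp ha
      rcases (Nat.Prime.eq_one_or_self_of_dvd hs k hk) with rfl | rfl
      · rfl
      · exact absurd (dvd_mul_left _ 2) hsa
  · right; left
    have hco : Nat.Coprime a 2 := Nat.coprime_two_right.mpr (Nat.odd_iff.mpr (by omega))
    have hdvd : a ∣ s := hco.dvd_of_dvd_mul_left ha
    rcases (Nat.Prime.eq_one_or_self_of_dvd hs a hdvd) with rfl | rfl
    · omega
    · rfl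

private lemma necessity_two {n s : ℕ} (hs : s.Prime) (hs2 : s ≠ 2)
    (σ : Equiv.Perm (Fin n)) (hsign : Equiv.Perm.sign σ = 1)
    (hord : orderOf σ = 2 * s) : s + 4 ≤ n := by
  set m := σ.cycleType with hm
  have hlcm : m.lcm = 2 * s := by rw [hm, Equiv.Perm.lcm_cycleType, hord]
  have hmem : ∀ a ∈ m, a = 2 ∨ a = s ∨ a = 2 * s := by
    intro a ham
    exact dvd_two_mul_prime hs hs2 (hlcm ▸ Multiset.dvd_lcm ham)
      (Equiv.Perm.two_le_of_mem_cycleType ham)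
  have hs3 : 3 ≤ s := by have := hs.two_le; omega
  have hsodd : Odd s := hs.odd_of_ne_two hs2
  set a := m.count 2 with hac
  set b := m.count s with hbc
  set c := m.count (2 * s) with hcc
  have hne1 : (2 : ℕ) ≠ s := by omega
  have hne2 : (2 : ℕ) ≠ 2 * s := by omega
  have hne3 : s ≠ 2 * s := by omega
  have hmeq : m = Multiset.replicate a 2 + Multiset.replicate b s
      + Multiset.replicate c (2 * s) := by
    ext x
    simp only [Multiset.count_add, Multiset.count_replicate]
    by_cases hx2 : x = 2
    · subst hx2; split_ifs <;> omega
    · by_cases hxs : x = s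
      · subst hxs; split_ifs <;> omega
      · by_cases hx2s : x = 2 * s
        · subst hx2s; split_ifs <;> omega
        · have hxm : x ∉ m := fun h => by rcases hmem x h with h | h | h <;> tauto
          rw [Multiset.count_eq_zero_of_notMem hxm]
          split_ifs <;> omega
  have hsum_eq : m.sum = 2 * a + s * b + 2 * s * c := by
    rw [hmeq]; simp [Multiset.sum_replicate, mul_comm]
  have hcard_eq : Multiset.card m = a + b + c := by
    rw [hmeq]; simp
  -- parity
  have hpar : Even (m.sum + Multiset.card m) := by
    have h := Equiv.Perm.sign_of_cycleType σ
    rw [hsign, ← hm] at h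
    exact (neg_one_pow_eq_one_iff_even (by decide : (-1 : ℤˣ) ≠ 1)).mp h.symm
  have hsplit : m.sum + Multiset.card m = (a + c) + (2 * a + (s + 1) * b + 2 * s * c) := by
    rw [hsum_eq, hcard_eq]; ring
  have heven_ac : Even (a + c) := by
    rw [hsplit] at hpar
    have h1 : Even (2 * a + (s + 1) * b + 2 * s * c) :=
      (((even_two_mul a).add ((hsodd.add_one).mul_right b)).add
        (by rw [mul_assoc]; exact even_two_mul (s * c)))
    exact (Nat.even_add.mp hpar).mpr h1
  -- existence of entries
  have hac1 : 1 ≤ a + c := by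
    obtain ⟨x, hxm, hx2⟩ := prime_dvd_lcm_multiset Nat.prime_two
      (hlcm ▸ dvd_mul_right 2 s)
    rcases hmem x hxm with rfl | rfl | rfl
    · have : 1 ≤ a := Multiset.one_le_count_iff_mem.mpr hxm; omega
    · exact absurd hx2 (by rw [Nat.two_dvd_ne_zero, Nat.odd_iff.mp hsodd])
    · have : 1 ≤ c := Multiset.one_le_count_iff_mem.mpr hxm; omega
  have hbc1 : 1 ≤ b + c := by
    obtain ⟨x, hxm, hxs⟩ := prime_dvd_lcm_multiset hs (hlcm ▸ dvd_mul_left s 2)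
    rcases hmem x hxm with rfl | rfl | rfl
    · exact absurd hxs (by intro h; have := Nat.le_of_dvd (by norm_num) h; omega)
    · have : 1 ≤ b := Multiset.one_le_count_iff_mem.mpr hxm; omega
    · have : 1 ≤ c := Multiset.one_le_count_iff_mem.mpr hxm; omega
  have hsn : m.sum ≤ n := by
    rw [hm, Equiv.Perm.sum_cycleType]
    simpa using Finset.card_le_univ σ.support
  rw [hsum_eq] at hsn
  obtain ⟨t, ht⟩ := heven_ac
  rcases Nat.lt_or_ge c 2 with hc | hc
  · interval_cases c
    · -- c = 0
      have ha2 : 2 ≤ a := by omega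
      have hb1 : 1 ≤ b := by omega
      have : s * 1 ≤ s * b := Nat.mul_le_mul_left s hb1
      simp only [mul_zero, add_zero] at hsn
      nlinarith
    · -- c = 1
      have ha1 : 1 ≤ a := by omega
      simp only [mul_one] at hsn
      nlinarith
  · have : 2 * s * 2 ≤ 2 * s * c := Nat.mul_le_mul_left _ hc
    nlinarith

private lemma char_odd {n r s : ℕ} (hr : r.Prime) (hs : s.Prime) (hrs : r ≠ s)
    (hr2 : r ≠ 2) (hs2 : s ≠ 2) :
    (∃ x : alternatingGroup (Fin n), orderOf x = r * s) ↔ r + s ≤ n := by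
  constructor
  · rintro ⟨⟨σ, hσ⟩, hx⟩
    rw [Subgroup.orderOf_mk] at hx
    have hlcm : σ.cycleType.lcm = r * s := by rw [Equiv.Perm.lcm_cycleType, hx]
    have h1 : r + s ≤ σ.cycleType.sum := sum_ge_add hr hs hrs hlcm
      (fun a ha => by have := Equiv.Perm.two_le_of_mem_cycleType ha; omega)
    have h2 : σ.cycleType.sum ≤ n := by
      rw [Equiv.Perm.sum_cycleType]
      simpa using Finset.card_le_univ σ.support
    omega
  · intro hle
    have hco : Nat.Coprime r s := (Nat.coprime_primes hr hs).mpr hrs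
    have hlcm : Multiset.lcm {r, s} = r * s := by
      simp only [Multiset.insert_eq_cons, Multiset.lcm_cons, Multiset.lcm_singleton]
      rw [normalize_eq, lcm_eq_nat_lcm, hco.lcm_eq_mul]
    obtain ⟨x, hx⟩ := exists_alt_orderOf (n := n) {r, s}
      (by simpa using hle)
      (by intro x hx; simp only [Multiset.insert_eq_cons, Multiset.mem_cons,
            Multiset.mem_singleton] at hx
          rcases hx with rfl | rfl
          exacts [hr.two_le, hs.two_le])
      (by have hro := hr.odd_of_ne_two hr2
          have hso := hs.odd_of_ne_two hs2
          obtain ⟨u, hu⟩ := hro; obtain ⟨v, hv⟩ := hso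
          simp only [Multiset.insert_eq_cons, Multiset.sum_cons, Multiset.sum_singleton,
            Multiset.card_cons, Multiset.card_singleton]
          rw [Nat.even_iff]; omega)
    exact ⟨x, by rw [hx, hlcm]⟩

private lemma char_two {n s : ℕ} (hs : s.Prime) (hs2 : s ≠ 2) :
    (∃ x : alternatingGroup (Fin n), orderOf x = 2 * s) ↔ s + 4 ≤ n := by
  constructor
  · rintro ⟨⟨σ, hσ⟩, hx⟩
    rw [Subgroup.orderOf_mk] at hx
    exact necessity_two hs hs2 σ (Equiv.Perm.mem_alternatingGroup.mp hσ) hx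
  · intro hle
    have hco : Nat.Coprime 2 s := (Nat.coprime_primes Nat.prime_two hs).mpr (Ne.symm hs2)
    have hl1 : Nat.lcm 2 s = 2 * s := hco.lcm_eq_mul
    have hl2 : Nat.lcm 2 (2 * s) = 2 * s :=
      Nat.dvd_antisymm (Nat.lcm_dvd (dvd_mul_right 2 s) dvd_rfl) (Nat.dvd_lcm_right _ _)
    have hlcm : Multiset.lcm (2 ::ₘ 2 ::ₘ {s}) = 2 * s := by
      simp only [Multiset.lcm_cons, Multiset.lcm_singleton]
      rw [normalize_eq, lcm_eq_nat_lcm, lcm_eq_nat_lcm, hl1, hl2]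
    obtain ⟨x, hx⟩ := exists_alt_orderOf (n := n) (2 ::ₘ 2 ::ₘ {s})
      (by simp only [Multiset.sum_cons, Multiset.sum_singleton]; omega)
      (by intro x hx
          simp only [Multiset.mem_cons, Multiset.mem_singleton] at hx
          rcases hx with rfl | rfl | rfl
          exacts [le_refl 2, le_refl 2, hs.two_le])
      (by obtain ⟨v, hv⟩ := hs.odd_of_ne_two hs2
          simp only [Multiset.sum_cons, Multiset.sum_singleton, Multiset.card_cons,
            Multiset.card_singleton]
          rw [Nat.even_iff]; omega)
    exact ⟨x, by rw [hx, hlcm]⟩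

private lemma prime_dvd_half_factorial {t n N : ℕ} (ht : t.Prime) (hn : 4 ≤ n)
    (hN : 2 * N = (Nat.factorial n)) : t ∣ N ↔ t ≤ n := by
  constructor
  · intro h
    have : t ∣ (Nat.factorial n) := hN ▸ Dvd.dvd.mul_left h 2
    exact (Nat.Prime.dvd_factorial ht).mp this
  · intro h
    by_cases ht2 : t = 2
    · subst ht2
      have h4 : 4 ∣ (Nat.factorial n) := Nat.dvd_factorial (by norm_num) hn
      rw [← hN] at h4
      omega
    · have hodd : Odd t := ht.odd_of_ne_two ht2
      have hdvd : t ∣ 2 * N := hN ▸ (Nat.Prime.dvd_factorial ht).mpr h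
      have hco : Nat.Coprime t 2 := Nat.coprime_two_right.mpr hodd
      exact hco.dvd_of_dvd_mul_left hdvd

/-- Lemma 4.2: for a prime `p ≥ 7`, `Γ(A_{p+1}) ≠ Γ(A_p)` iff there exist distinct
primes `r, s` with `p + 1 = r + s`. Prime graph equality is spelled out as: the same
primes divide the group orders, and for all distinct primes `r, s` the groups have an
element of order `r * s` simultaneously. -/
theorem prime_graph_alternating_succ_iff_goldbach {p : ℕ} (hp : p.Prime) (hp7 : 7 ≤ p) :
    (¬ ((∀ t : ℕ, t.Prime →
          (t ∣ Nat.card (alternatingGroup (Fin (p + 1))) ↔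
            t ∣ Nat.card (alternatingGroup (Fin p)))) ∧
        (∀ r s : ℕ, r.Prime → s.Prime → r ≠ s →
          ((∃ x : alternatingGroup (Fin (p + 1)), orderOf x = r * s) ↔
            (∃ y : alternatingGroup (Fin p), orderOf y = r * s))))) ↔
      ∃ r s : ℕ, r.Prime ∧ s.Prime ∧ r ≠ s ∧ p + 1 = r + s := by
  have hpodd : Odd p := hp.odd_of_ne_two (by omega)
  have hcard : ∀ n : ℕ, 2 ≤ n → 2 * Nat.card (alternatingGroup (Fin n)) = (Nat.factorial n) := by
    intro n hn
    haveI : Nontrivial (Fin n) := Fin.nontrivial_iff_two_le.mpr hn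
    rw [Nat.card_eq_fintype_card, two_mul_card_alternatingGroup, Fintype.card_perm,
      Fintype.card_fin]
  have hP1 : ∀ t : ℕ, t.Prime →
      (t ∣ Nat.card (alternatingGroup (Fin (p + 1))) ↔
        t ∣ Nat.card (alternatingGroup (Fin p))) := by
    intro t ht
    rw [prime_dvd_half_factorial ht (by omega) (hcard (p + 1) (by omega)),
      prime_dvd_half_factorial ht (by omega) (hcard p (by omega))]
    constructor
    · intro h
      rcases Nat.lt_or_ge t (p + 1) with h' | h'
      · omega
      · exfalso
        have htp : t = p + 1 := by omega
        have : Odd t := ht.odd_of_ne_two (by omega)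
        obtain ⟨u, hu⟩ := this; obtain ⟨v, hv⟩ := hpodd
        omega
    · omega
  constructor
  · intro hne
    by_contra hng
    push_neg at hng
    apply hne
    refine ⟨hP1, ?_⟩
    intro r s hr hs hrs
    rcases eq_or_ne r 2 with rfl | hr2
    · have hs2 : s ≠ 2 := Ne.symm hrs
      rw [char_two hs hs2, char_two hs hs2]
      have hso := hs.odd_of_ne_two hs2
      obtain ⟨u, hu⟩ := hso; obtain ⟨v, hv⟩ := hpodd
      omega
    · rcases eq_or_ne s 2 with rfl | hs2
      · rw [show r * 2 = 2 * r from mul_comm r 2]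
        rw [char_two hr hr2, char_two hr hr2]
        have hro := hr.odd_of_ne_two hr2
        obtain ⟨u, hu⟩ := hro; obtain ⟨v, hv⟩ := hpodd
        omega
      · rw [char_odd hr hs hrs hr2 hs2, char_odd hr hs hrs hr2 hs2]
        have hng' := hng r s hr hs hrs
        omega
  · rintro ⟨r, s, hr, hs, hrs, hsum⟩
    intro hcon
    obtain ⟨-, hP2⟩ := hcon
    have hr2 : r ≠ 2 := by
      rintro rfl
      have hse : Even s := by obtain ⟨v, hv⟩ := hpodd; exact ⟨v, by omega⟩
      have := (Nat.Prime.even_iff hs).mp hse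
      omega
    have hs2 : s ≠ 2 := by
      rintro rfl
      have hre : Even r := by obtain ⟨v, hv⟩ := hpodd; exact ⟨v, by omega⟩
      have := (Nat.Prime.even_iff hr).mp hre
      omega
    have h := hP2 r s hr hs hrs
    rw [char_odd hr hs hrs hr2 hs2, char_odd hr hs hrs hr2 hs2] at h
    have h1 : r + s ≤ p + 1 := by omega
    have := h.mp h1
    omega
end

section
/- Let n ≥ 15 be an odd natural number that is not prime. Then Γ(A_n) = Γ(A_{n−1}) if and only if n − 4 is not prime. Here A_n denotes the alternating group alternatingGroup (Fin n). -/
open Equiv Equiv.Perm Multiset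

private lemma prime_dvd_mlcm {p : ℕ} (hp : p.Prime) {C : Multiset ℕ} (h : p ∣ C.lcm) :
    ∃ c ∈ C, p ∣ c := by
  induction C using Multiset.induction with
  | empty =>
    simp only [Multiset.lcm_zero, Nat.dvd_one] at h
    exact absurd h hp.one_lt.ne'
  | cons a C ih =>
    rw [Multiset.lcm_cons] at h
    have h2 : p ∣ a * C.lcm := h.trans (lcm_dvd (dvd_mul_right _ _) (dvd_mul_left _ _))
    rcases hp.dvd_mul.mp h2 with h3 | h3
    · exact ⟨a, Multiset.mem_cons_self _ _, h3⟩
    · obtain ⟨c, hc, hcd⟩ := ih h3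
      exact ⟨c, Multiset.mem_cons_of_mem hc, hcd⟩

private lemma even_filter_card_of_sign {C : Multiset ℕ} (h : Even (C.sum + Multiset.card C)) :
    Even (Multiset.card (C.filter (fun c => Even c))) := by
  suffices hiff : Even (C.sum + Multiset.card C) ↔
      Even (Multiset.card (C.filter (fun c => Even c))) from hiff.mp h
  clear h
  induction C using Multiset.induction with
  | empty => simp
  | cons a C ih =>
    rw [Multiset.sum_cons, Multiset.card_cons]
    rcases Nat.even_or_odd a with ha | ha
    · rw [Multiset.filter_cons_of_pos _ ha, Multiset.card_cons]
      rw [Nat.even_iff] at ha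
      simp only [Nat.even_iff] at ih ⊢
      omega
    · rw [Multiset.filter_cons_of_neg _ (by simpa [Nat.not_even_iff_odd] using ha)]
      rw [Nat.odd_iff] at ha
      simp only [Nat.even_iff] at ih ⊢
      omega

/-- In `A_m`, an element of order `r*s` with `r, s` distinct odd primes exists iff
`r + s ≤ m`. -/
private lemma exists_order_odd_odd {m r s : ℕ} (hr : r.Prime) (hs : s.Prime)
    (hro : Odd r) (hso : Odd s) (hrs : r ≠ s) :
    (∃ x : alternatingGroup (Fin m), orderOf x = r * s) ↔ r + s ≤ m := by
  have hcop : Nat.Coprime r s := (Nat.coprime_primes hr hs).mpr hrs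
  constructor
  · rintro ⟨⟨g, hg⟩, hx⟩
    rw [Subgroup.orderOf_mk] at hx
    set C := g.cycleType with hCdef
    have hlcm : C.lcm = r * s := by rw [hCdef, Equiv.Perm.lcm_cycleType, hx]
    have hsum : C.sum ≤ m := by
      rw [hCdef, Equiv.Perm.sum_cycleType]
      simpa using (Finset.card_le_univ g.support)
    obtain ⟨c, hcC, hrc⟩ := prime_dvd_mlcm hr (hlcm ▸ Dvd.intro s rfl)
    obtain ⟨d, hdC, hsd⟩ := prime_dvd_mlcm hs (hlcm ▸ Dvd.intro_left r rfl)
    by_cases hsc : s ∣ c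
    · have : r * s ∣ c := hcop.mul_dvd_of_dvd_of_dvd hrc hsc
      have hc2 : 2 ≤ c := Equiv.Perm.two_le_of_mem_cycleType hcC
      have hcle : c ≤ C.sum := Multiset.le_sum_of_mem hcC
      have : r * s ≤ c := Nat.le_of_dvd (by omega) this
      have hadd : r + s ≤ r * s := Nat.add_le_mul hr.two_le hs.two_le
      omega
    · have hcd : d ≠ c := fun h => hsc (h ▸ hsd)
      have hdC' : d ∈ C.erase c := (Multiset.mem_erase_of_ne hcd).mpr hdC
      have hsplit : C.sum = c + (C.erase c).sum := by
        conv_lhs => rw [← Multiset.cons_erase hcC]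
        rw [Multiset.sum_cons]
      have hdle : d ≤ (C.erase c).sum := Multiset.le_sum_of_mem hdC'
      have hrle : r ≤ c := Nat.le_of_dvd
        (by have := Equiv.Perm.two_le_of_mem_cycleType hcC; omega) hrc
      have hsle : s ≤ d := Nat.le_of_dvd
        (by have := Equiv.Perm.two_le_of_mem_cycleType (Multiset.mem_of_mem_erase hdC'); omega) hsd
      omega
  · intro h
    obtain ⟨g, hg⟩ := (Equiv.Perm.exists_with_cycleType_iff (Fin m)
      (m := {r, s})).mpr ⟨by simpa using h, by
        intro a ha
        rcases Multiset.mem_cons.mp ha with h | h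
        · exact h ▸ hr.two_le
        · rw [Multiset.mem_singleton] at h; exact h ▸ hs.two_le⟩
    have horder : orderOf g = r * s := by
      rw [← Equiv.Perm.lcm_cycleType, hg]
      show Multiset.lcm (r ::ₘ {s}) = r * s
      rw [Multiset.lcm_cons, Multiset.lcm_singleton, normalize_eq, lcm_eq_nat_lcm,
        Nat.Coprime.lcm_eq_mul hcop]
    have hmem : g ∈ alternatingGroup (Fin m) := by
      rw [Equiv.Perm.mem_alternatingGroup, Equiv.Perm.sign_of_cycleType, hg]
      have : Multiset.sum {r, s} + Multiset.card {r, s} = r + s + 2 := by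
        simp [Multiset.sum_cons, Multiset.card_cons]
      rw [this]
      have : Even (r + s + 2) := by
        obtain ⟨a, ha⟩ := hro; obtain ⟨b, hb⟩ := hso
        exact ⟨a + b + 2, by omega⟩
      exact Even.neg_one_pow this
    exact ⟨⟨g, hmem⟩, by rw [Subgroup.orderOf_mk, horder]⟩

/-- In `A_m`, an element of order `2*s` with `s` an odd prime exists iff `s + 4 ≤ m`. -/
private lemma exists_order_two_odd {m s : ℕ} (hs : s.Prime) (hso : Odd s) :
    (∃ x : alternatingGroup (Fin m), orderOf x = 2 * s) ↔ s + 4 ≤ m := by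
  have hs2 : s ≠ 2 := by rintro rfl; exact (Nat.not_odd_iff_even.mpr (by norm_num)) hso
  have hcop : Nat.Coprime 2 s := (Nat.coprime_primes Nat.prime_two hs).mpr (Ne.symm hs2)
  constructor
  · rintro ⟨⟨g, hg⟩, hx⟩
    rw [Subgroup.orderOf_mk] at hx
    set C := g.cycleType with hCdef
    have hlcm : C.lcm = 2 * s := by rw [hCdef, Equiv.Perm.lcm_cycleType, hx]
    have hsum : C.sum ≤ m := by
      rw [hCdef, Equiv.Perm.sum_cycleType]
      simpa using (Finset.card_le_univ g.support)
    have hsign : Even (C.sum + Multiset.card C) := by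
      have h1 : Equiv.Perm.sign g = 1 := Equiv.Perm.mem_alternatingGroup.mp hg
      rw [Equiv.Perm.sign_of_cycleType] at h1
      exact (neg_one_pow_eq_one_iff_even (by decide : (-1 : ℤˣ) ≠ 1)).mp h1
    have hEF : Even (Multiset.card (C.filter (fun c => Even c))) :=
      even_filter_card_of_sign hsign
    obtain ⟨c, hcC, hc2⟩ := prime_dvd_mlcm Nat.prime_two (hlcm ▸ Dvd.intro s rfl)
    obtain ⟨d, hdC, hsd⟩ := prime_dvd_mlcm hs (hlcm ▸ Dvd.intro_left 2 rfl)
    set F := C.filter (fun c => Even c) with hFdef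
    have hcF : c ∈ F := Multiset.mem_filter.mpr ⟨hcC, (even_iff_two_dvd).mpr hc2⟩
    have hFcard : 2 ≤ Multiset.card F := by
      have h1 : 1 ≤ Multiset.card F := Multiset.card_pos_iff_exists_mem.mpr ⟨c, hcF⟩
      rcases hEF with ⟨k, hk⟩; omega
    have hsplitC : F.sum + (C.filter (fun c => ¬ Even c)).sum = C.sum := by
      rw [hFdef, ← Multiset.sum_add, Multiset.filter_add_not]
    have hFmem2 : ∀ x ∈ F, 2 ≤ x := fun x hx =>
      Equiv.Perm.two_le_of_mem_cycleType (Multiset.mem_of_mem_filter hx)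
    by_cases hes : ∃ e ∈ F, s ∣ e
    · obtain ⟨e, heF, hse⟩ := hes
      have hee : Even e := (Multiset.mem_filter.mp heF).2
      have h2s : 2 * s ∣ e := hcop.mul_dvd_of_dvd_of_dvd (even_iff_two_dvd.mp hee) hse
      have he2 : 2 ≤ e := hFmem2 e heF
      have hege : 2 * s ≤ e := Nat.le_of_dvd (by omega) h2s
      have hsplitF : F.sum = e + (F.erase e).sum := by
        conv_lhs => rw [← Multiset.cons_erase heF]
        rw [Multiset.sum_cons]
      have : ∃ f, f ∈ F.erase e := by
        apply Multiset.card_pos_iff_exists_mem.mp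
        rw [Multiset.card_erase_of_mem heF, Nat.pred_eq_sub_one]
        omega
      obtain ⟨f, hf⟩ := this
      have hfge : 2 ≤ f := hFmem2 f (Multiset.mem_of_mem_erase hf)
      have hfle : f ≤ (F.erase e).sum := Multiset.le_sum_of_mem hf
      have hs3 : 3 ≤ s := by
        rcases hso with ⟨k, hk⟩
        have := hs.two_le; omega
      omega
    · push_neg at hes
      have hdo : ¬ Even d := by
        intro hde
        exact hes d (Multiset.mem_filter.mpr ⟨hdC, hde⟩) hsd
      have hdF' : d ∈ C.filter (fun c => ¬ Even c) := Multiset.mem_filter.mpr ⟨hdC, hdo⟩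
      have hdle : d ≤ (C.filter (fun c => ¬ Even c)).sum := Multiset.le_sum_of_mem hdF'
      have hsle : s ≤ d := Nat.le_of_dvd
        (by have := Equiv.Perm.two_le_of_mem_cycleType hdC; omega) hsd
      have hF4 : 4 ≤ F.sum := by
        have := Multiset.card_nsmul_le_sum hFmem2
        simp only [smul_eq_mul] at this
        omega
      omega
  · intro h
    obtain ⟨g, hg⟩ := (Equiv.Perm.exists_with_cycleType_iff (Fin m)
      (m := {2, 2, s})).mpr ⟨by
        show (2 : ℕ) + (2 + (s + 0)) ≤ Fintype.card (Fin m)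
        simpa using (by omega : 2 + (2 + (s + 0)) ≤ m), by
        intro a ha
        rcases Multiset.mem_cons.mp ha with h' | h'
        · omega
        rcases Multiset.mem_cons.mp h' with h'' | h''
        · omega
        · rw [Multiset.mem_singleton] at h''; exact h'' ▸ hs.two_le⟩
    have horder : orderOf g = 2 * s := by
      rw [← Equiv.Perm.lcm_cycleType, hg]
      show Multiset.lcm (2 ::ₘ 2 ::ₘ {s}) = 2 * s
      rw [Multiset.lcm_cons, Multiset.lcm_cons, Multiset.lcm_singleton, normalize_eq,
        lcm_eq_nat_lcm, lcm_eq_nat_lcm, Nat.Coprime.lcm_eq_mul hcop]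
      exact Nat.dvd_antisymm (Nat.lcm_dvd ⟨s, rfl⟩ dvd_rfl) (Nat.dvd_lcm_right _ _)
    have hmem : g ∈ alternatingGroup (Fin m) := by
      rw [Equiv.Perm.mem_alternatingGroup, Equiv.Perm.sign_of_cycleType, hg]
      have h1 : Multiset.sum {2, 2, s} + Multiset.card {2, 2, s} = s + 7 := by
        simp [Multiset.sum_cons, Multiset.card_cons]; ring
      rw [h1]
      have : Even (s + 7) := by
        obtain ⟨k, hk⟩ := hso; exact ⟨k + 4, by omega⟩
      exact Even.neg_one_pow this
    exact ⟨⟨g, hmem⟩, by rw [Subgroup.orderOf_mk, horder]⟩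

/-- A prime divides the order of `A_m` (for `5 ≤ m`) iff it is at most `m`. -/
private lemma prime_dvd_card_alternating {m t : ℕ} (hm : 5 ≤ m) (ht : t.Prime) :
    t ∣ Nat.card (alternatingGroup (Fin m)) ↔ t ≤ m := by
  have hnt : Nontrivial (Fin m) := Fin.nontrivial_iff_two_le.mpr (by omega)
  have hcard : 2 * Nat.card (alternatingGroup (Fin m)) = m.factorial := by
    rw [Nat.card_eq_fintype_card, two_mul_card_alternatingGroup, Fintype.card_perm,
      Fintype.card_fin]
  constructor
  · intro h
    have : t ∣ m.factorial := by
      rw [← hcard]; exact h.mul_left 2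
    exact (Nat.Prime.dvd_factorial ht).mp this
  · intro h
    have hfac : t ∣ m.factorial := (Nat.Prime.dvd_factorial ht).mpr h
    rcases eq_or_ne t 2 with rfl | ht2
    · have h4 : 4 ∣ m.factorial := by
        have : (4 : ℕ).factorial ∣ m.factorial := Nat.factorial_dvd_factorial (by omega)
        exact dvd_trans (by decide) this
      omega
    · rw [← hcard] at hfac
      rcases ht.dvd_mul.mp hfac with h' | h'
      · exact absurd ((Nat.prime_dvd_prime_iff_eq ht Nat.prime_two).mp h') ht2
      · exact h'

/-- Lemma 4.4: for odd composite `n ≥ 15`, `Γ(A_n) = Γ(A_{n-1})` iff `n - 4` is not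
prime. Prime graph equality is spelled out as: the same primes divide the group
orders, and for all distinct primes `r, s` the groups have an element of order
`r * s` simultaneously. -/
theorem prime_graph_alternating_pred_iff {n : ℕ} (hn : 15 ≤ n) (hodd : Odd n)
    (hnp : ¬ n.Prime) :
    ((∀ t : ℕ, t.Prime →
        (t ∣ Nat.card (alternatingGroup (Fin n)) ↔
          t ∣ Nat.card (alternatingGroup (Fin (n - 1))))) ∧
      (∀ r s : ℕ, r.Prime → s.Prime → r ≠ s →
        ((∃ x : alternatingGroup (Fin n), orderOf x = r * s) ↔
          (∃ y : alternatingGroup (Fin (n - 1)), orderOf y = r * s)))) ↔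
      ¬ (n - 4).Prime := by
  constructor
  · rintro ⟨-, hedge⟩ hp4
    have hso : Odd (n - 4) := by
      obtain ⟨k, hk⟩ := hodd; exact ⟨k - 2, by omega⟩
    have h2ne : (2 : ℕ) ≠ n - 4 := by
      rintro h
      exact (Nat.not_odd_iff_even.mpr (h ▸ (by norm_num))) hso
    have h1 : ∃ x : alternatingGroup (Fin n), orderOf x = 2 * (n - 4) :=
      (exists_order_two_odd hp4 hso).mpr (by omega)
    have h2 := (hedge 2 (n - 4) Nat.prime_two hp4 h2ne).mp h1
    have := (exists_order_two_odd (m := n - 1) hp4 hso).mp h2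
    omega
  · intro h4
    constructor
    · intro t ht
      rw [prime_dvd_card_alternating (by omega) ht,
        prime_dvd_card_alternating (by omega) ht]
      have htn : t ≠ n := by rintro rfl; exact hnp ht
      omega
    · intro r s hr hs hrs
      rcases eq_or_ne r 2 with rfl | hr2
      · have hso : Odd s := hs.odd_of_ne_two (Ne.symm hrs)
        rw [exists_order_two_odd hs hso, exists_order_two_odd hs hso]
        have : s ≠ n - 4 := by rintro rfl; exact h4 hs
        omega
      · rcases eq_or_ne s 2 with rfl | hs2
        · have hro : Odd r := hr.odd_of_ne_two hrs
          have hcomm : ∀ m : ℕ, (∃ x : alternatingGroup (Fin m), orderOf x = r * 2) ↔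
              (∃ x : alternatingGroup (Fin m), orderOf x = 2 * r) := by
            intro m; rw [mul_comm]
          rw [hcomm, hcomm, exists_order_two_odd hr hro, exists_order_two_odd hr hro]
          have : r ≠ n - 4 := by rintro rfl; exact h4 hr
          omega
        · have hro : Odd r := hr.odd_of_ne_two hr2
          have hso : Odd s := hs.odd_of_ne_two hs2
          rw [exists_order_odd_odd hr hs hro hso hrs,
            exists_order_odd_odd hr hs hro hso hrs]
          have : r + s ≠ n := by
            rintro rfl
            obtain ⟨a, ha⟩ := hro; obtain ⟨b, hb⟩ := hso; obtain ⟨k, hk⟩ := hodd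
            omega
          omega
end

section
/- Let n ≥ 15 be odd and suppose r = n − 4 is prime. Then the alternating group A_n = alternatingGroup (Fin n) contains an element of order 2·(n−4), but the alternating group A_{n−1} = alternatingGroup (Fin (n−1)) contains no element of order 2·(n−4). -/
/-- Key step in Lemma 4.4: if `n ≥ 15` is odd and `n - 4` is prime, then `A_n` has an
element of order `2(n-4)` but `A_{n-1}` has none. -/
theorem alternating_order_two_mul_sub_four {n : ℕ} (hn : 15 ≤ n) (hodd : Odd n)
    (hr : (n - 4).Prime) :
    (∃ x : alternatingGroup (Fin n), orderOf x = 2 * (n - 4)) ∧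
      ¬ ∃ y : alternatingGroup (Fin (n - 1)), orderOf y = 2 * (n - 4) := by
  set r := n - 4 with hr4
  have hr11 : 11 ≤ r := by omega
  have hrodd : Odd r := by
    rcases hodd with ⟨k, hk⟩
    exact ⟨k - 2, by omega⟩
  have hrne2 : r ≠ 2 := by omega
  have hcop : Nat.Coprime r 2 := (Nat.coprime_primes hr Nat.prime_two).mpr hrne2
  have hlcm_r2 : Nat.lcm r 2 = 2 * r := by
    rw [Nat.Coprime.lcm_eq_mul hcop, Nat.mul_comm]
  constructor
  · -- existence in A_n : cycle type (r, 2, 2)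
    obtain ⟨g, hg⟩ : ∃ g : Equiv.Perm (Fin n), g.cycleType = (r ::ₘ 2 ::ₘ {2}) := by
      rw [Equiv.Perm.exists_with_cycleType_iff]
      constructor
      · simp only [Multiset.sum_cons, Multiset.sum_singleton, Fintype.card_fin]
        omega
      · intro a ha
        simp only [Multiset.mem_cons, Multiset.mem_singleton] at ha
        rcases ha with rfl | rfl | rfl <;> omega
    have horder : orderOf g = 2 * r := by
      rw [← Equiv.Perm.lcm_cycleType, hg]
      simp only [Multiset.lcm_cons, Multiset.lcm_singleton, normalize_eq,
        lcm_eq_nat_lcm, Nat.lcm_self]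
      exact hlcm_r2
    have hsign : Equiv.Perm.sign g = 1 := by
      rw [Equiv.Perm.sign_of_cycleType, hg]
      have : (r ::ₘ 2 ::ₘ {2}).sum + Multiset.card (r ::ₘ 2 ::ₘ {2}) = r + 7 := by
        simp
      rw [this]
      exact Even.neg_one_pow (by rcases hrodd with ⟨k, hk⟩; exact ⟨k + 4, by omega⟩)
    exact ⟨⟨g, Equiv.Perm.mem_alternatingGroup.mpr hsign⟩,
      by rw [Subgroup.orderOf_mk, horder]⟩
  · -- no element of order 2r in A_{n-1}
    rintro ⟨y, hy⟩
    set g : Equiv.Perm (Fin (n - 1)) := (y : Equiv.Perm (Fin (n - 1))) with hgdef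
    have horder : orderOf g = 2 * r := by rw [hgdef, Subgroup.orderOf_coe, hy]
    -- every cycle length is 2 or r
    have hmem : ∀ a ∈ g.cycleType, a = 2 ∨ a = r := by
      intro a ha
      have h2 : 2 ≤ a := Equiv.Perm.two_le_of_mem_cycleType ha
      have hdvd : a ∣ 2 * r := horder ▸ Equiv.Perm.dvd_of_mem_cycleType ha
      have hle : a ≤ n - 1 := by
        have := Multiset.le_sum_of_mem ha
        rw [Equiv.Perm.sum_cycleType] at this
        calc a ≤ g.support.card := this
          _ ≤ Fintype.card (Fin (n - 1)) := g.support.card_le_univ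
          _ = n - 1 := Fintype.card_fin _
      by_cases hra : r ∣ a
      · obtain ⟨k, hk⟩ := hra
        have hk2 : k ∣ 2 := by
          have := hdvd
          rw [hk] at this
          exact (Nat.mul_dvd_mul_iff_left (by omega : 0 < r)).mp
            (by rwa [Nat.mul_comm 2 r] at this)
        rcases (Nat.dvd_prime Nat.prime_two).mp hk2 with rfl | rfl
        · right; omega
        · exfalso; omega
      · left
        have hcop' : Nat.Coprime a r := (Nat.coprime_comm.mp
          ((Nat.Prime.coprime_iff_not_dvd hr).mpr hra))
        have : a ∣ 2 := hcop'.dvd_of_dvd_mul_right hdvd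
        exact le_antisymm (Nat.le_of_dvd two_pos this) h2
    -- r ∈ cycleType
    have hrin : r ∈ g.cycleType := by
      by_contra hno
      have : g.cycleType.lcm ∣ 2 := Multiset.lcm_dvd.mpr (fun a ha => by
        rcases hmem a ha with rfl | rfl
        · exact dvd_rfl
        · exact absurd ha hno)
      rw [Equiv.Perm.lcm_cycleType, horder] at this
      have := Nat.le_of_dvd (by norm_num) this
      omega
    have h2in : (2 : ℕ) ∈ g.cycleType := by
      by_contra hno
      have : g.cycleType.lcm ∣ r := Multiset.lcm_dvd.mpr (fun a ha => by
        rcases hmem a ha with rfl | rfl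
        · exact absurd ha hno
        · exact dvd_rfl)
      rw [Equiv.Perm.lcm_cycleType, horder] at this
      have := Nat.le_of_dvd (by omega) this
      omega
    have h2in' : (2 : ℕ) ∈ g.cycleType.erase r :=
      Multiset.mem_erase_of_ne (by omega) |>.mpr h2in
    have hct : g.cycleType = r ::ₘ 2 ::ₘ ((g.cycleType.erase r).erase 2) := by
      rw [Multiset.cons_erase h2in', Multiset.cons_erase hrin]
    -- the rest is empty
    have hsum : g.cycleType.sum ≤ n - 1 := by
      rw [Equiv.Perm.sum_cycleType]
      calc g.support.card ≤ Fintype.card (Fin (n - 1)) := g.support.card_le_univ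
        _ = n - 1 := Fintype.card_fin _
    have hrest : (g.cycleType.erase r).erase 2 = 0 := by
      by_contra hne
      obtain ⟨a, ha⟩ := Multiset.exists_mem_of_ne_zero hne
      have ha' : a ∈ g.cycleType := by
        rw [hct]; exact Multiset.mem_cons_of_mem (Multiset.mem_cons_of_mem ha)
      have h2a : 2 ≤ a := Equiv.Perm.two_le_of_mem_cycleType ha'
      have hale : a ≤ ((g.cycleType.erase r).erase 2).sum := Multiset.le_sum_of_mem ha
      have : g.cycleType.sum = r + 2 + ((g.cycleType.erase r).erase 2).sum := by
        rw [hct]; simp [Multiset.sum_cons]; ring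
      omega
    rw [hrest] at hct
    have hsign : Equiv.Perm.sign g = 1 := Equiv.Perm.mem_alternatingGroup.mp y.2
    rw [Equiv.Perm.sign_of_cycleType, hct] at hsign
    have hexp : (r ::ₘ 2 ::ₘ 0).sum + Multiset.card (r ::ₘ 2 ::ₘ 0) = r + 4 := by simp
    rw [hexp] at hsign
    have : ((-1 : ℤˣ) ^ (r + 4)) = -1 :=
      Odd.neg_one_pow ⟨(r - 1) / 2 + 2, by rcases hrodd with ⟨k, hk⟩; omega⟩
    rw [this] at hsign
    exact absurd hsign (by decide)
end

section
/- Let G = alternatingGroup (Fin 7 ⊕ Fin 3) (isomorphic to A_10) and let H be the intersection of G with the image of the embedding Equiv.Perm.sumCongrHom : Equiv.Perm (Fin 7) × Equiv.Perm (Fin 3) → Equiv.Perm (Fin 7 ⊕ Fin 3) (so H is the intransitive subgroup (S_7 × S_3) ∩ A_10). Then Γ(G) = Γ(H): a prime divides |G| iff it divides |H|, and for all distinct primes r, s, G has an element of order r·s iff H has an element of order r·s. -/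
/-!
Both groups have prime graph with vertices `2, 3, 5, 7` and edges `2–3, 2–5, 3–5, 3–7`.
A prime dividing the order of a permutation of ten points divides one of its cycle lengths,
so two distinct primes `p, q` of the graph of `A₁₀` need cycles covering `p + q ≤ 10` points,
which rules out `5–7`. For `2–7`, an even permutation has an even number of cycles of even
length, hence at least two of them, and together with a `7`-cycle they would need `11` points.
The remaining edges, and all four primes, are realized by explicit elements of `S₇ × S₃`.
-/

open Equiv Equiv.Perm

lemma orderOf_eq_prime_mul_prime {M : Type*} [Monoid M] {x : M} {p q : ℕ}
    (hp : p.Prime) (hq : q.Prime) (h : x ^ (p * q) = 1) (hxp : x ^ p ≠ 1) (hxq : x ^ q ≠ 1) :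
    orderOf x = p * q :=
  orderOf_eq_of_pow_and_pow_div_prime (Nat.mul_pos hp.pos hq.pos) h fun t ht htpq => by
    rcases ht.dvd_mul.1 htpq with htp | htq
    · rwa [(Nat.prime_dvd_prime_iff_eq ht hp).1 htp, Nat.mul_div_cancel_left _ hp.pos]
    · rwa [(Nat.prime_dvd_prime_iff_eq ht hq).1 htq, Nat.mul_div_cancel _ hq.pos]

lemma Nat.Prime.eq_two_or_three_or_five_or_seven_of_le_ten {p : ℕ} (hp : p.Prime) (h : p ≤ 10) :
    p = 2 ∨ p = 3 ∨ p = 5 ∨ p = 7 := by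
  interval_cases p <;> revert hp <;> norm_num

lemma Multiset.add_le_sum_of_mem_of_ne {M : Type*} [AddCommMonoid M] [PartialOrder M]
    [IsOrderedAddMonoid M] [CanonicallyOrderedAdd M] [DecidableEq M] {s : Multiset M} {a b : M} (ha : a ∈ s) (hb : b ∈ s)
    (hab : a ≠ b) : a + b ≤ s.sum := by
  rw [← Multiset.cons_erase ha, Multiset.sum_cons]
  exact add_le_add_right (Multiset.le_sum_of_mem ((Multiset.mem_erase_of_ne hab.symm).2 hb)) a

namespace Equiv.Perm

variable {α : Type*} [Fintype α] [DecidableEq α]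

lemma exists_mem_cycleType_dvd_of_dvd_orderOf {σ : Perm α} {p : ℕ} (hp : p.Prime)
    (h : p ∣ orderOf σ) : ∃ n ∈ σ.cycleType, p ∣ n := by
  have hlcm : σ.cycleType.lcm ∣ σ.cycleType.prod :=
    Multiset.lcm_dvd.2 fun _ hn => Multiset.dvd_prod hn
  rw [lcm_cycleType] at hlcm
  exact hp.prime.exists_mem_multiset_dvd (h.trans hlcm)

lemma le_of_dvd_of_mem_cycleType {σ : Perm α} {m n : ℕ} (hn : n ∈ σ.cycleType) (h : m ∣ n) :
    m ≤ n :=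
  Nat.le_of_dvd (zero_lt_two.trans_le (two_le_of_mem_cycleType hn)) h

lemma le_card_of_mem_cycleType {σ : Perm α} {n : ℕ} (hn : n ∈ σ.cycleType) :
    n ≤ Fintype.card α :=
  (Multiset.le_sum_of_mem hn).trans σ.sum_cycleType_le

lemma le_card_of_prime_dvd_orderOf {σ : Perm α} {p : ℕ} (hp : p.Prime) (h : p ∣ orderOf σ) :
    p ≤ Fintype.card α := by
  obtain ⟨n, hn, hpn⟩ := exists_mem_cycleType_dvd_of_dvd_orderOf hp h
  exact (le_of_dvd_of_mem_cycleType hn hpn).trans (le_card_of_mem_cycleType hn)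

lemma add_le_card_of_primes_dvd_orderOf {σ : Perm α} {p q : ℕ} (hp : p.Prime) (hq : q.Prime)
    (hpq : p ≠ q) (hpσ : p ∣ orderOf σ) (hqσ : q ∣ orderOf σ) : p + q ≤ Fintype.card α := by
  obtain ⟨a, ha, hpa⟩ := exists_mem_cycleType_dvd_of_dvd_orderOf hp hpσ
  obtain ⟨b, hb, hqb⟩ := exists_mem_cycleType_dvd_of_dvd_orderOf hq hqσ
  by_cases hab : a = b
  · subst hab
    have hpqa : p * q ∣ a := ((Nat.coprime_primes hp hq).2 hpq).mul_dvd_of_dvd_of_dvd hpa hqb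
    have hp2 := hp.two_le
    have hq2 := hq.two_le
    calc p + q ≤ p * q := by nlinarith
      _ ≤ a := le_of_dvd_of_mem_cycleType ha hpqa
      _ ≤ Fintype.card α := le_card_of_mem_cycleType ha
  · calc p + q ≤ a + b := Nat.add_le_add (le_of_dvd_of_mem_cycleType ha hpa)
          (le_of_dvd_of_mem_cycleType hb hqb)
      _ ≤ σ.cycleType.sum := Multiset.add_le_sum_of_mem_of_ne ha hb hab
      _ ≤ Fintype.card α := σ.sum_cycleType_le

lemma sign_eq_neg_one_pow_card_filter_even_cycleType (σ : Perm α) :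
    sign σ = (-1) ^ Multiset.card (σ.cycleType.filter Even) := by
  rw [sign_of_cycleType']
  induction σ.cycleType using Multiset.induction_on with
  | empty => rfl
  | cons n s ih =>
    by_cases hn : Even n
    · simp [Multiset.filter_cons_of_pos _ hn, ih, hn.neg_one_pow, pow_succ, mul_comm]
    · simp [Multiset.filter_cons_of_neg _ hn, ih, (Nat.not_even_iff_odd.1 hn).neg_one_pow]

lemma even_card_filter_even_cycleType {σ : Perm α} (hσ : sign σ = 1) :
    Even (Multiset.card (σ.cycleType.filter Even)) := by
  rwa [sign_eq_neg_one_pow_card_filter_even_cycleType, neg_one_pow_eq_one_iff_even (by decide)]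
    at hσ

lemma add_four_le_card_of_two_mul_prime_dvd_orderOf {σ : Perm α} (hσ : sign σ = 1) {p : ℕ}
    (hp : p.Prime) (hp2 : p ≠ 2) (h2σ : 2 ∣ orderOf σ) (hpσ : p ∣ orderOf σ) :
    p + 4 ≤ Fintype.card α := by
  set E := σ.cycleType.filter Even
  set O := σ.cycleType.filter fun n => ¬Even n
  have hsum : E.sum + O.sum ≤ Fintype.card α :=
    (Multiset.sum_filter_add_sum_filter_not _).trans_le σ.sum_cycleType_le
  have hE_two_le : ∀ n ∈ E, 2 ≤ n := fun n hn =>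
    two_le_of_mem_cycleType (Multiset.mem_of_mem_filter hn)
  obtain ⟨a, ha, h2a⟩ := exists_mem_cycleType_dvd_of_dvd_orderOf Nat.prime_two h2σ
  have hcardE : 2 ≤ Multiset.card E := by
    have hpos : 0 < Multiset.card E :=
      Multiset.card_pos_iff_exists_mem.2 ⟨a, Multiset.mem_filter.2 ⟨ha, even_iff_two_dvd.2 h2a⟩⟩
    obtain ⟨k, hk⟩ : Even (Multiset.card E) := even_card_filter_even_cycleType hσ
    omega
  have hE_sum : Multiset.card E * 2 ≤ E.sum := by
    simpa using Multiset.card_nsmul_le_sum hE_two_le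
  obtain ⟨b, hb, hpb⟩ := exists_mem_cycleType_dvd_of_dvd_orderOf hp hpσ
  by_cases hbe : Even b
  · have hbE : b ∈ E := Multiset.mem_filter.2 ⟨hb, hbe⟩
    have h2pb : 2 * p ≤ b := le_of_dvd_of_mem_cycleType hb <|
      ((Nat.coprime_primes Nat.prime_two hp).2 hp2.symm).mul_dvd_of_dvd_of_dvd
        (even_iff_two_dvd.1 hbe) hpb
    have hrest := Multiset.card_nsmul_le_sum (s := E.erase b) (a := 2) fun n hn =>
      hE_two_le n (Multiset.mem_of_mem_erase hn)
    rw [Multiset.card_erase_of_mem hbE, smul_eq_mul, Nat.pred_eq_sub_one] at hrest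
    have hE_split := Multiset.sum_erase hbE
    have hp_two_le := hp.two_le
    omega
  · have hpO : p ≤ O.sum := (le_of_dvd_of_mem_cycleType hb hpb).trans
      (Multiset.le_sum_of_mem (Multiset.mem_filter.2 ⟨hb, hbe⟩))
    omega

end Equiv.Perm

lemma exists_orderOf_eq_orderOf_sumCongr {α β : Type*} [Fintype α] [DecidableEq α] [Fintype β]
    [DecidableEq β] (a : Perm α) (b : Perm β) (hab : sign a = sign b) :
    ∃ y : ↥(alternatingGroup (α ⊕ β) ⊓ (sumCongrHom α β).range),
      orderOf y = orderOf (Perm.sumCongr a b) := by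
  have hmem : Perm.sumCongr a b ∈ alternatingGroup (α ⊕ β) ⊓ (sumCongrHom α β).range :=
    Subgroup.mem_inf.2 ⟨mem_alternatingGroup.2 (by rw [sign_sumCongr, hab, Int.units_mul_self]),
      (a, b), rfl⟩
  exact ⟨⟨_, hmem⟩, Subgroup.orderOf_mk _ _⟩

lemma mul_mem_of_primes_dvd_orderOf_in_A10 {σ : Perm (Fin 7 ⊕ Fin 3)}
    (hσ : σ ∈ alternatingGroup (Fin 7 ⊕ Fin 3)) {r s : ℕ} (hr : r.Prime) (hs : s.Prime)
    (hrs : r ≠ s) (hrσ : r ∣ orderOf σ) (hsσ : s ∣ orderOf σ) :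
    r * s ∈ ({6, 10, 15, 21} : Finset ℕ) := by
  have hcard : Fintype.card (Fin 7 ⊕ Fin 3) = 10 := rfl
  have hr' := hr.eq_two_or_three_or_five_or_seven_of_le_ten
    (hcard ▸ le_card_of_prime_dvd_orderOf hr hrσ)
  have hs' := hs.eq_two_or_three_or_five_or_seven_of_le_ten
    (hcard ▸ le_card_of_prime_dvd_orderOf hs hsσ)
  have hrs10 := hcard ▸ add_le_card_of_primes_dvd_orderOf hr hs hrs hrσ hsσ
  have hr2 : r = 2 → s + 4 ≤ 10 := by
    rintro rfl; exact hcard ▸ add_four_le_card_of_two_mul_prime_dvd_orderOf hσ hs hrs.symm hrσ hsσ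
  have hs2 : s = 2 → r + 4 ≤ 10 := by
    rintro rfl; exact hcard ▸ add_four_le_card_of_two_mul_prime_dvd_orderOf hσ hr hrs hsσ hrσ
  rcases hr' with rfl | rfl | rfl | rfl <;> rcases hs' with rfl | rfl | rfl | rfl <;> simp_all

set_option maxRecDepth 10000 in
lemma exists_orderOf_eq_in_S7xS3_cap_A10 {n : ℕ} (hn : n ∈ ({6, 10, 15, 21} : Finset ℕ)) :
    ∃ y : ↥(alternatingGroup (Fin 7 ⊕ Fin 3) ⊓ (sumCongrHom (Fin 7) (Fin 3)).range),
      orderOf y = n := by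
  have witness : ∀ (a : Perm (Fin 7)) (b : Perm (Fin 3)) {p q : ℕ}, p.Prime → q.Prime →
      sign a = sign b → Perm.sumCongr a b ^ (p * q) = 1 → Perm.sumCongr a b ^ p ≠ 1 →
      Perm.sumCongr a b ^ q ≠ 1 →
      ∃ y : ↥(alternatingGroup (Fin 7 ⊕ Fin 3) ⊓ (sumCongrHom (Fin 7) (Fin 3)).range),
        orderOf y = p * q :=
    fun a b _ _ hp hq hab h hp1 hq1 => (exists_orderOf_eq_orderOf_sumCongr a b hab).imp
      fun _ hy => hy.trans (orderOf_eq_prime_mul_prime hp hq h hp1 hq1)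
  simp only [Finset.mem_insert, Finset.mem_singleton] at hn
  rcases hn with rfl | rfl | rfl | rfl
  · exact witness (c[0, 1] * c[2, 3]) (finRotate 3) (p := 2) (q := 3) (by norm_num) (by norm_num)
      (by decide) (by decide) (by decide) (by decide)
  · exact witness (c[0, 1, 2, 3, 4] * c[5, 6]) c[0, 1] (p := 2) (q := 5) (by norm_num)
      (by norm_num) (by decide) (by decide) (by decide) (by decide)
  · exact witness c[0, 1, 2, 3, 4] (finRotate 3) (p := 3) (q := 5) (by norm_num) (by norm_num)
      (by decide) (by decide) (by decide) (by decide)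
  · exact witness (finRotate 7) (finRotate 3) (p := 3) (q := 7) (by norm_num) (by norm_num)
      (by decide) (by decide) (by decide) (by decide)

/-- The case `(n,k) = (10,7)`: with `G = A(Fin 7 ⊕ Fin 3) ≅ A₁₀` and
`H = (S₇ × S₃) ∩ G` (the intersection of `G` with the range of `sumCongrHom`),
one has `Γ(G) = Γ(H)`. -/
theorem prime_graph_A10_eq_S7xS3_cap :
    (∀ t : ℕ, t.Prime →
      (t ∣ Nat.card (alternatingGroup (Fin 7 ⊕ Fin 3)) ↔
        t ∣ Nat.card (alternatingGroup (Fin 7 ⊕ Fin 3) ⊓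
          (Equiv.Perm.sumCongrHom (Fin 7) (Fin 3)).range : Subgroup (Equiv.Perm (Fin 7 ⊕ Fin 3))))) ∧
    (∀ r s : ℕ, r.Prime → s.Prime → r ≠ s →
      ((∃ x : alternatingGroup (Fin 7 ⊕ Fin 3), orderOf x = r * s) ↔
        (∃ y : (alternatingGroup (Fin 7 ⊕ Fin 3) ⊓
          (Equiv.Perm.sumCongrHom (Fin 7) (Fin 3)).range : Subgroup (Equiv.Perm (Fin 7 ⊕ Fin 3))),
          orderOf y = r * s))) := by
  refine ⟨fun t ht => ⟨fun htG => ?_, fun htH => htH.trans (Subgroup.card_dvd_of_le inf_le_left)⟩,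
    fun r s hr hs hrs => ⟨fun ⟨x, hx⟩ => ?_, fun ⟨y, hy⟩ => ⟨⟨y, (Subgroup.mem_inf.1 y.2).1⟩, ?_⟩⟩⟩
  · have : Fact t.Prime := ⟨ht⟩
    obtain ⟨x, hx⟩ := exists_prime_orderOf_dvd_card' t htG
    have ht10 : t ≤ 10 :=
      le_card_of_prime_dvd_orderOf ht ((Subgroup.orderOf_coe x).trans hx).symm.dvd
    have h210 : 10 * 21 ∣ Nat.card ↥(alternatingGroup (Fin 7 ⊕ Fin 3) ⊓
        (sumCongrHom (Fin 7) (Fin 3)).range) := by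
      obtain ⟨y₁, hy₁⟩ := exists_orderOf_eq_in_S7xS3_cap_A10 (n := 10) (by simp)
      obtain ⟨y₂, hy₂⟩ := exists_orderOf_eq_in_S7xS3_cap_A10 (n := 21) (by simp)
      exact Nat.Coprime.mul_dvd_of_dvd_of_dvd (by norm_num)
        (hy₁ ▸ orderOf_dvd_natCard y₁) (hy₂ ▸ orderOf_dvd_natCard y₂)
    rcases ht.eq_two_or_three_or_five_or_seven_of_le_ten ht10 with rfl | rfl | rfl | rfl <;>
      exact dvd_trans (by norm_num) h210
  · have hx' : orderOf (x : Perm (Fin 7 ⊕ Fin 3)) = r * s := (Subgroup.orderOf_coe x).trans hx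
    exact exists_orderOf_eq_in_S7xS3_cap_A10 <| mul_mem_of_primes_dvd_orderOf_in_A10
      x.2 hr hs hrs (hx' ▸ dvd_mul_right r s) (hx' ▸ dvd_mul_left s r)
  · rwa [Subgroup.orderOf_mk, Subgroup.orderOf_coe]
end

section
/- Let m ≥ 8 be an even natural number and let ℓ be the least prime that does not divide m. Then 2ℓ < m (that is, ℓ < m/2). -/
/-- If `m ≥ 8` is even and `ℓ` is the least prime not dividing `m`, then `2ℓ < m`. -/
theorem least_prime_not_dvd_lt_half {m ℓ : ℕ} (hm : 8 ≤ m) (hme : Even m)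
    (hℓ : IsLeast {t : ℕ | t.Prime ∧ ¬ t ∣ m} ℓ) :
    2 * ℓ < m := by
  obtain ⟨p, hp, hlt, hle⟩ := Nat.exists_prime_lt_and_le_two_mul (m / 4) (by omega)
  have hm2 : m % 2 = 0 := Nat.even_iff.mp hme
  have hpodd : p % 2 = 1 := by
    have := hp.two_le
    have : p ≠ 2 := by omega
    have h := Nat.odd_iff.mp (hp.odd_of_ne_two this)
    omega
  have hpm : ¬ p ∣ m := by
    rintro ⟨k, rfl⟩
    have hk4 : k < 4 := by
      have h1 : p * k < p * 4 := by omega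
      exact Nat.lt_of_mul_lt_mul_left h1
    interval_cases k <;> omega
  have h2p : 2 * p < m := by
    rcases Nat.lt_or_ge (2 * p) m with h | h
    · exact h
    · exfalso
      have : 2 * p = m := by omega
      exact hpm ⟨2, by omega⟩
  have hℓp : ℓ ≤ p := hℓ.2 ⟨hp, hpm⟩
  omega
end

section
/- Let q be an even prime power, let F_q be a finite field with q elements, let m ≥ 8 be even, and let ℓ be the least prime not dividing m. Let r be a primitive prime divisor of q^ℓ − 1 and let s be a primitive prime divisor of q^{m−ℓ} − 1. Then the symplectic group Sp_{2m}(q) = Matrix.symplecticGroup (Fin m) F_q contains an element of order r·s. -/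
/-!
Since `ℓ ∤ m` we have `ℓ ≠ m - ℓ`, so the primitive prime divisors `r` and `s` are distinct.
The extensions `𝔽_{q^ℓ}` and `𝔽_{q^(m-ℓ)}` of `𝔽_q` have units of orders `r` and `s`, so the
`m`-dimensional `𝔽_q`-algebra `𝔽_{q^ℓ} × 𝔽_{q^(m-ℓ)}` has a unit of order `r * s`. Its left
regular representation lies in `GL_m(q)`, which embeds in `Sp_{2m}(q)` as `g ↦ diag(g, g⁻ᵀ)`.
-/

open Matrix FiniteField

namespace Matrix

variable {l R : Type*} [Fintype l] [DecidableEq l] [CommRing R]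

def unitsToSymplecticGroup : (Matrix l l R)ˣ →* symplecticGroup l R where
  toFun g := ⟨fromBlocks ↑g 0 0 (↑g⁻¹)ᵀ, SymplecticGroup.fromBlocks_mem_iff.2
    ⟨by simp, by simp, by
      rw [transpose_zero, zero_mul, sub_zero, ← transpose_mul, Units.inv_mul, transpose_one]⟩⟩
  map_one' := by ext1; simp [fromBlocks_one]
  map_mul' g h := by ext1; simp [fromBlocks_multiply, transpose_mul]

theorem unitsToSymplecticGroup_injective :
    Function.Injective (unitsToSymplecticGroup : (Matrix l l R)ˣ →* symplecticGroup l R) := by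
  intro g h hgh
  ext1
  simpa [unitsToSymplecticGroup] using
    congr_arg (fun M : symplecticGroup l R => toBlocks₁₁ (M : Matrix (l ⊕ l) (l ⊕ l) R)) hgh

end Matrix

theorem Algebra.exists_units_matrix_orderOf_eq {F A : Type*} [Field F] [Ring A] [Algebra F A]
    [Module.Finite F A] {n : ℕ} (hn : Module.finrank F A = n) (u : Aˣ) :
    ∃ g : (Matrix (Fin n) (Fin n) F)ˣ, orderOf g = orderOf u :=
  let ρ := leftMulMatrix (Module.finBasisOfFinrankEq F A hn)
  ⟨Units.map ρ.toMonoidHom u,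
    orderOf_injective _ (Units.map_injective (leftMulMatrix_injective _)) u⟩

theorem FiniteField.exists_units_extension_orderOf_eq (F : Type*) [Field F] [Finite F]
    (p : ℕ) [Fact p.Prime] [CharP F p] (n : ℕ) [NeZero n] {r : ℕ} (hr : r.Prime)
    (hrn : r ∣ Nat.card F ^ n - 1) : ∃ u : (Extension F p n)ˣ, orderOf u = r := by
  have := Fact.mk hr
  apply exists_prime_orderOf_dvd_card'
  rwa [Nat.card_units, natCard_extension]

-- A prime factor of `m - 1` is a prime not dividing `m`.
theorem Nat.lt_of_isLeast_prime_not_dvd {m ℓ : ℕ} (hm : 3 ≤ m)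
    (hℓ : IsLeast {t : ℕ | t.Prime ∧ ¬ t ∣ m} ℓ) : ℓ < m := by
  have hp : (m - 1).minFac.Prime := Nat.minFac_prime (by omega)
  have hndvd : ¬ (m - 1).minFac ∣ m := fun h => by
    have hsub : m - (m - 1) = 1 := by omega
    have hdvd := Nat.dvd_sub h (Nat.minFac_dvd (m - 1))
    rw [hsub, Nat.dvd_one] at hdvd
    exact hp.one_lt.ne' hdvd
  have := Nat.minFac_le (by omega : 0 < m - 1)
  have := hℓ.2 ⟨hp, hndvd⟩
  omega

theorem Nat.eq_of_primitive_dvd_pow_sub_one {q r a b : ℕ} (ha : 1 ≤ a) (hb : 1 ≤ b)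
    (hra : r ∣ q ^ a - 1) (hrb : r ∣ q ^ b - 1)
    (hpa : ∀ i, 1 ≤ i → i < a → ¬ r ∣ q ^ i - 1) (hpb : ∀ i, 1 ≤ i → i < b → ¬ r ∣ q ^ i - 1) :
    a = b := by
  rcases lt_trichotomy a b with h | h | h
  · exact absurd hra (hpb a ha h)
  · exact h
  · exact absurd hrb (hpa b hb h)

theorem Sp_has_element_of_order_ppd_mul_general {q : ℕ}
    (F : Type*) [Field F] [Fintype F] (hF : Fintype.card F = q)
    {m : ℕ} (hm : 8 ≤ m)
    {ℓ : ℕ} (hℓ : IsLeast {t : ℕ | t.Prime ∧ ¬ t ∣ m} ℓ)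
    {r : ℕ} (hr : r.Prime) (hrdvd : r ∣ q ^ ℓ - 1)
    (hrppd : ∀ i : ℕ, 1 ≤ i → i < ℓ → ¬ r ∣ q ^ i - 1)
    {s : ℕ} (hs : s.Prime) (hsdvd : s ∣ q ^ (m - ℓ) - 1)
    (hsppd : ∀ i : ℕ, 1 ≤ i → i < m - ℓ → ¬ s ∣ q ^ i - 1) :
    ∃ x : Matrix.symplecticGroup (Fin m) F, orderOf x = r * s := by
  have hℓm : ℓ < m := Nat.lt_of_isLeast_prime_not_dvd (by omega) hℓ
  obtain ⟨⟨hℓp, hℓndvd⟩, -⟩ := hℓ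
  have hrs : r ≠ s := by
    rintro rfl
    have := Nat.eq_of_primitive_dvd_pow_sub_one hℓp.pos (by omega) hrdvd hsdvd hrppd hsppd
    exact hℓndvd ⟨2, by omega⟩
  obtain ⟨p, _⟩ := CharP.exists F
  have := Fact.mk (CharP.char_is_prime F p)
  have := NeZero.mk hℓp.ne_zero
  have := NeZero.mk (show m - ℓ ≠ 0 by omega)
  rw [← hF, ← Nat.card_eq_fintype_card] at hrdvd hsdvd
  obtain ⟨u, hu⟩ := exists_units_extension_orderOf_eq F p ℓ hr hrdvd
  obtain ⟨v, hv⟩ := exists_units_extension_orderOf_eq F p (m - ℓ) hs hsdvd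
  have hdim : Module.finrank F (Extension F p ℓ × Extension F p (m - ℓ)) = m := by
    rw [Module.finrank_prod, finrank_extension, finrank_extension]
    omega
  obtain ⟨g, hg⟩ := Algebra.exists_units_matrix_orderOf_eq hdim (MulEquiv.prodUnits.symm (u, v))
  refine ⟨unitsToSymplecticGroup g, ?_⟩
  rw [orderOf_injective _ unitsToSymplecticGroup_injective, hg, MulEquiv.orderOf_eq,
    Prod.orderOf_mk, hu, hv, ((Nat.coprime_primes hr hs).2 hrs).lcm_eq_mul]

/-- Adjacency claim from the proof of Proposition 3.2: for `q` an even prime power,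
`m ≥ 8` even, `ℓ` the least prime not dividing `m`, `r` a primitive prime divisor of
`q^ℓ - 1` and `s` a primitive prime divisor of `q^(m-ℓ) - 1`, the group `Sp_{2m}(q)`
contains an element of order `r * s`. -/
theorem Sp_has_element_of_order_ppd_mul {q : ℕ} (hq : IsPrimePow q) (hqe : Even q)
    (F : Type*) [Field F] [Fintype F] (hF : Fintype.card F = q)
    {m : ℕ} (hm : 8 ≤ m) (hme : Even m)
    {ℓ : ℕ} (hℓ : IsLeast {t : ℕ | t.Prime ∧ ¬ t ∣ m} ℓ)
    {r : ℕ} (hr : r.Prime) (hrdvd : r ∣ q ^ ℓ - 1)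
    (hrppd : ∀ i : ℕ, 1 ≤ i → i < ℓ → ¬ r ∣ q ^ i - 1)
    {s : ℕ} (hs : s.Prime) (hsdvd : s ∣ q ^ (m - ℓ) - 1)
    (hsppd : ∀ i : ℕ, 1 ≤ i → i < m - ℓ → ¬ s ∣ q ^ i - 1) :
    ∃ x : Matrix.symplecticGroup (Fin m) F, orderOf x = r * s :=
  Sp_has_element_of_order_ppd_mul_general F hF hm hℓ hr hrdvd hrppd hs hsdvd hsppd
end

section
/- Let q be an even prime power, let F_q be a finite field with q elements, and let m ≥ 2. Then Sp_{2m}(q) = Matrix.symplecticGroup (Fin m) F_q contains an involution x (a symplectic transvection) whose centralizer has cardinality q^{2m−1} · |Sp_{2m−2}(q)|, where Sp_{2m−2}(q) = Matrix.symplecticGroup (Fin (m−1)) F_q. -/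
/-!
Split off a hyperbolic pair `(e₁, f₁)`, so that the form is `J₂ ⊕ J_{2k}` with `k = m - 1`, and
take `x = 1 + E_{e₁ f₁}`. A matrix `N` commutes with `x` iff its `e₁`-column and `f₁`-row vanish
off the diagonal and `N e₁ e₁ = N f₁ f₁ = a`. For such `N` the isometry condition says that
`a ^ 2 = 1`, hence `a = 1` in characteristic two, that the lower right block `S` is symplectic,
and that the `f₁`-column below the plane is determined by `S` and the rest `u` of the `e₁`-row.
So the centralizer is parametrized by `(N e₁ f₁, u, S) ∈ F × F^{2k} × Sp_{2k}(F)`.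
-/

open Matrix

namespace Matrix

section Transvection

variable {n R : Type*} [Fintype n] [DecidableEq n] [CommRing R]

theorem commute_transvection_iff [NoZeroDivisors R] {i j : n} {c : R} (hc : c ≠ 0)
    (N : Matrix n n R) :
    Commute N (transvection i j c) ↔
      (∀ a ≠ i, N a i = 0) ∧ (∀ b ≠ j, N j b = 0) ∧ N i i = N j j := by
  have entry : ∀ a b, (N * transvection i j c) a b = (transvection i j c * N) a b ↔
      ((if b = j then c * N a i else 0) = if a = i then c * N j b else 0) := by
    intro a b
    by_cases ha : a = i <;> by_cases hb : b = j <;>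
      simp_all [transvection_mul_apply_of_ne, mul_transvection_apply_of_ne, eq_comm]
  simp only [Commute, SemiconjBy, ← Matrix.ext_iff, entry]
  refine ⟨fun h => ⟨fun a ha => ?_, fun b hb => ?_, ?_⟩, fun ⟨hcol, hrow, hdiag⟩ a b => ?_⟩
  · simpa [ha, hc] using h a j
  · simpa [hb, hc, eq_comm] using h i b
  · simpa [hc] using h i j
  · by_cases ha : a = i <;> by_cases hb : b = j <;> simp_all

theorem transvection_mul_self_of_charTwo [CharP R 2] {i j : n} (hij : i ≠ j) (c : R) :
    transvection i j c * transvection i j c = 1 := by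
  rw [transvection_mul_transvection_same i j hij, CharTwo.add_self_eq_zero, transvection_zero]

theorem orderOf_transvection_of_charTwo [CharP R 2] {i j : n} (hij : i ≠ j) {c : R} (hc : c ≠ 0) :
    orderOf (transvection i j c) = 2 := by
  refine orderOf_eq_prime (by rw [sq, transvection_mul_self_of_charTwo hij]) fun h => hc ?_
  simpa [transvection, hij] using congr_fun₂ h i j

end Transvection

section SympForm

variable {k m R : Type*} [Fintype k] [CommRing R]

def sympForm (v w : k ⊕ k → R) : R :=
  ∑ a, (v (Sum.inr a) * w (Sum.inl a) - v (Sum.inl a) * w (Sum.inr a))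

theorem sympForm_unit (v w : Unit ⊕ Unit → R) :
    sympForm v w = v (Sum.inr ()) * w (Sum.inl ()) - v (Sum.inl ()) * w (Sum.inr ()) := by
  simp [sympForm]

@[simp]
theorem sympForm_self (v : k ⊕ k → R) : sympForm v v = 0 :=
  Finset.sum_eq_zero fun a _ => by ring

theorem sympForm_comm (v w : k ⊕ k → R) : sympForm w v = -sympForm v w := by
  rw [sympForm, sympForm, ← Finset.sum_neg_distrib]
  exact Finset.sum_congr rfl fun a _ => by ring

@[simp]
theorem sympForm_zero_left (w : k ⊕ k → R) : sympForm (fun _ => 0) w = 0 := by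
  simp [sympForm]

@[simp]
theorem sympForm_zero_right (v : k ⊕ k → R) : sympForm v (fun _ => 0) = 0 := by
  simp [sympForm]

theorem mul_J_mul_transpose_apply [DecidableEq k] (M N : Matrix m (k ⊕ k) R) (i j : m) :
    (M * J k R * Nᵀ) i j = sympForm (M i) (N j) := by
  simp [mul_apply, J, fromBlocks, Fintype.sum_sum_type, one_apply, sympForm, Finset.sum_add_distrib,
    sub_eq_add_neg]

end SympForm

section Reindex

variable {l l₁ l₂ ι R : Type*} [DecidableEq l] [DecidableEq l₁] [DecidableEq l₂] [CommRing R]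

theorem reindex_J_sumCongr (f : l ≃ l₁ ⊕ l₂) :
    reindex ((f.sumCongr f).trans (Equiv.sumSumSumComm _ _ _ _))
        ((f.sumCongr f).trans (Equiv.sumSumSumComm _ _ _ _)) (J l R) =
      fromBlocks (J l₁ R) 0 0 (J l₂ R) := by
  ext ((i | i) | (i | i)) ((j | j) | (j | j)) <;>
    simp [J, one_apply, EmbeddingLike.apply_eq_iff_eq]

variable [Fintype l] [Fintype ι] [DecidableEq ι]

theorem mem_symplecticGroup_iff_reindex (e : l ⊕ l ≃ ι) (M : Matrix (l ⊕ l) (l ⊕ l) R) :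
    M ∈ symplecticGroup l R ↔
      reindex e e M * reindex e e (J l R) * (reindex e e M)ᵀ = reindex e e (J l R) := by
  rw [SymplecticGroup.mem_iff, transpose_reindex, ← coe_reindexAlgEquiv R R e, ← map_mul,
    ← map_mul, (reindexAlgEquiv R R e).injective.eq_iff]

theorem card_centralizer_symplecticGroup (e : l ⊕ l ≃ ι) (x : symplecticGroup l R) :
    Nat.card (Subgroup.centralizer {x}) =
      Nat.card {N : Matrix ι ι R // N * reindex e e (J l R) * Nᵀ = reindex e e (J l R) ∧
        Commute N (reindex e e (x : Matrix (l ⊕ l) (l ⊕ l) R))} := by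
  refine Nat.card_congr <| (Equiv.subtypeEquivRight fun g => ?_).trans <|
    (Equiv.subtypeSubtypeEquivSubtypeInter _ (Commute · (x : Matrix (l ⊕ l) (l ⊕ l) R))).trans <|
      (reindex e e).subtypeEquiv fun M => ?_
  · exact Subgroup.mem_centralizer_singleton_iff.trans Subtype.ext_iff
  · rw [mem_symplecticGroup_iff_reindex e, ← coe_reindexAlgEquiv R R e, commute_map_iff (reindexAlgEquiv R R e).injective]

end Reindex

end Matrix

abbrev SplitIndex (k : Type*) := (Unit ⊕ Unit) ⊕ (k ⊕ k)

namespace SplitIndex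

variable {k m R : Type*}

abbrev e₁ : SplitIndex k := Sum.inl (Sum.inl ())

abbrev f₁ : SplitIndex k := Sum.inl (Sum.inr ())

variable [Fintype k] [DecidableEq k] [CommRing R]

variable (R k) in
def splitJ : Matrix (SplitIndex k) (SplitIndex k) R :=
  fromBlocks (J Unit R) 0 0 (J k R)

theorem mul_splitJ_mul_transpose_apply (M N : Matrix m (SplitIndex k) R) (i j : m) :
    (M * splitJ k R * Nᵀ) i j = M i f₁ * N j e₁ - M i e₁ * N j f₁ +
      sympForm (fun s => M i (Sum.inr s)) (fun s => N j (Sum.inr s)) := by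
  rw [← fromCols_toCols M, ← fromCols_toCols N, splitJ, transpose_fromCols,
    fromCols_mul_fromBlocks, fromCols_mul_fromRows]
  simp only [Matrix.mul_zero, add_zero, zero_add, Matrix.add_apply, mul_J_mul_transpose_apply,
    sympForm_unit]
  rfl

def centralizerElem (a : R) (u : k ⊕ k → R) (S : Matrix (k ⊕ k) (k ⊕ k) R) :
    Matrix (SplitIndex k) (SplitIndex k) R :=
  of fun i j =>
    match i, j with
    | Sum.inl (Sum.inl _), Sum.inl (Sum.inl _) => 1
    | Sum.inl (Sum.inl _), Sum.inl (Sum.inr _) => a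
    | Sum.inl (Sum.inl _), Sum.inr j => u j
    | Sum.inl (Sum.inr _), Sum.inl (Sum.inr _) => 1
    | Sum.inr i, Sum.inl (Sum.inr _) => sympForm u (S i)
    | Sum.inr i, Sum.inr j => S i j
    | _, _ => 0

theorem centralizerElem_mul_splitJ_mul_transpose {a : R} {u : k ⊕ k → R}
    {S : Matrix (k ⊕ k) (k ⊕ k) R} (hS : S ∈ symplecticGroup k R) :
    centralizerElem a u S * splitJ k R * (centralizerElem a u S)ᵀ = splitJ k R := by
  have hS' (i j : k ⊕ k) : sympForm (S i) (S j) = J k R i j := by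
    rw [← mul_J_mul_transpose_apply, SymplecticGroup.mem_iff.1 hS]
  ext ((i | i) | i) ((j | j) | j) <;> rw [mul_splitJ_mul_transpose_apply]
  case inr.inl.inl => simp [centralizerElem, splitJ, sympForm_comm u]
  all_goals simp [centralizerElem, splitJ, J, hS']

theorem commute_centralizerElem [IsDomain R] (a : R) (u : k ⊕ k → R)
    (S : Matrix (k ⊕ k) (k ⊕ k) R) :
    Commute (centralizerElem a u S) (transvection e₁ f₁ 1) := by
  refine (commute_transvection_iff one_ne_zero _).2 ⟨?_, ?_, rfl⟩ <;>
    rintro ((i | i) | i) h <;> simp_all [centralizerElem]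

theorem centralizerElem_one_zero_one :
    centralizerElem (1 : R) 0 1 = transvection (e₁ : SplitIndex k) f₁ 1 := by
  ext ((i | i) | i) ((j | j) | j) <;> simp [centralizerElem, transvection, one_apply, sympForm]

section Centralizer

variable [IsDomain R] {N : Matrix (SplitIndex k) (SplitIndex k) R}

theorem toBlocks₂₂_mem_symplecticGroup (hs : N * splitJ k R * Nᵀ = splitJ k R)
    (hc : Commute N (transvection e₁ f₁ 1)) : N.toBlocks₂₂ ∈ symplecticGroup k R := by
  obtain ⟨hcol, -, -⟩ := (commute_transvection_iff one_ne_zero N).1 hc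
  rw [SymplecticGroup.mem_iff]
  ext i j
  have hij := congr_fun₂ hs (Sum.inr i) (Sum.inr j)
  rw [mul_splitJ_mul_transpose_apply, hcol _ (by simp), hcol _ (by simp)] at hij
  simp only [splitJ, fromBlocks_apply₂₂, mul_zero, zero_mul, sub_zero, zero_add] at hij
  rw [mul_J_mul_transpose_apply]
  exact hij

theorem eq_centralizerElem [CharP R 2] (hs : N * splitJ k R * Nᵀ = splitJ k R)
    (hc : Commute N (transvection e₁ f₁ 1)) :
    N = centralizerElem (N e₁ f₁) (fun s => N e₁ (Sum.inr s)) N.toBlocks₂₂ := by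
  obtain ⟨hcol, hrow, hdiag⟩ := (commute_transvection_iff one_ne_zero N).1 hc
  -- The `(e₁, f₁)` entry of the isometry condition reads `N e₁ e₁ ^ 2 = 1`.
  have hdiag_one : N e₁ e₁ = 1 := by
    have h := congr_fun₂ hs e₁ f₁
    rw [mul_splitJ_mul_transpose_apply, hcol f₁ (by simp), ← hdiag] at h
    simp only [hrow _ (by simp : Sum.inr _ ≠ f₁), mul_zero, zero_sub, sympForm_zero_right,
      add_zero, splitJ, J, fromBlocks_apply₁₁, fromBlocks_apply₁₂, Matrix.neg_apply,
      one_apply_eq, neg_inj] at h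
    exact CharTwo.sq_injective (R := R) (by linear_combination h)
  have hcross (i : k ⊕ k) :
      N (Sum.inr i) f₁ = sympForm (fun s => N e₁ (Sum.inr s)) (N.toBlocks₂₂ i) := by
    have h := congr_fun₂ hs (Sum.inr i) e₁
    rw [mul_splitJ_mul_transpose_apply, hdiag_one, hcol _ (by simp), sympForm_comm] at h
    simp only [splitJ, mul_one, zero_mul, sub_zero, fromBlocks_apply₂₁, Matrix.zero_apply] at h
    exact add_neg_eq_zero.1 h
  ext ((i | i) | i) ((j | j) | j)
  case inr.inr => rfl
  all_goals simp [centralizerElem, hdiag_one, ← hdiag, hcol, hrow, hcross]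

end Centralizer

variable [IsDomain R] [CharP R 2]

variable (k R) in
def centralizerEquiv :
    {N : Matrix (SplitIndex k) (SplitIndex k) R //
      N * splitJ k R * Nᵀ = splitJ k R ∧ Commute N (transvection e₁ f₁ 1)} ≃
      (R × (k ⊕ k → R)) × symplecticGroup k R where
  toFun N := ((N.1 e₁ f₁, fun s => N.1 e₁ (Sum.inr s)),
    ⟨N.1.toBlocks₂₂, toBlocks₂₂_mem_symplecticGroup N.2.1 N.2.2⟩)
  invFun p := ⟨centralizerElem p.1.1 p.1.2 p.2,
    centralizerElem_mul_splitJ_mul_transpose p.2.2, commute_centralizerElem _ _ _⟩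
  left_inv N := Subtype.ext (eq_centralizerElem N.2.1 N.2.2).symm
  right_inv _ := rfl

theorem card_centralizer_transvection [Fintype R] :
    Nat.card {N : Matrix (SplitIndex k) (SplitIndex k) R //
      N * splitJ k R * Nᵀ = splitJ k R ∧ Commute N (transvection e₁ f₁ 1)} =
      Fintype.card R ^ (2 * Fintype.card k + 1) * Nat.card (symplecticGroup k R) := by
  rw [Nat.card_congr (centralizerEquiv k R), Nat.card_prod, Nat.card_prod, Nat.card_fun]
  simp only [Nat.card_eq_fintype_card, Fintype.card_sum]
  ring

end SplitIndex

open SplitIndex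

theorem Sp_transvection_centralizer_card_general {q : ℕ} (hqe : Even q)
    (F : Type*) [Field F] [Fintype F] (hF : Fintype.card F = q)
    {m : ℕ} (hm : 2 ≤ m) :
    ∃ x : Matrix.symplecticGroup (Fin m) F, orderOf x = 2 ∧
      Nat.card (Subgroup.centralizer ({x} : Set (Matrix.symplecticGroup (Fin m) F))) =
        q ^ (2 * m - 1) * Nat.card (Matrix.symplecticGroup (Fin (m - 1)) F) := by
  have : CharP F 2 :=
    ringChar.of_eq (FiniteField.even_card_iff_char_two.2 (hF ▸ Nat.even_iff.1 hqe))
  let f : Fin m ≃ Unit ⊕ Fin (m - 1) :=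
    (finCongr (by omega)).trans (finSumFinEquiv.symm.trans (finOneEquiv.sumCongr (.refl _)))
  let e := (f.sumCongr f).trans (Equiv.sumSumSumComm _ _ _ _)
  have hJ : reindex e e (J (Fin m) F) = splitJ (Fin (m - 1)) F := reindex_J_sumCongr f
  have hx : (reindex e e).symm (transvection e₁ f₁ 1) ∈ symplecticGroup (Fin m) F := by
    rw [mem_symplecticGroup_iff_reindex e, hJ, Equiv.apply_symm_apply,
      ← centralizerElem_one_zero_one]
    exact centralizerElem_mul_splitJ_mul_transpose (one_mem _)
  refine ⟨⟨_, hx⟩, ?_, ?_⟩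
  · rw [← orderOf_submonoid]
    exact ((reindexAlgEquiv F F e).symm.toMulEquiv.orderOf_eq _).trans
      (orderOf_transvection_of_charTwo (by simp) one_ne_zero)
  · rw [card_centralizer_symplecticGroup e, hJ]
    simp only [Equiv.apply_symm_apply]
    rw [card_centralizer_transvection, hF, Fintype.card_fin]
    congr 2
    omega

/-- For `q` an even prime power and `m ≥ 2`, `Sp_{2m}(q)` contains an involution
(a symplectic transvection) whose centralizer has order `q^(2m-1) · |Sp_{2m-2}(q)|`. -/
theorem Sp_transvection_centralizer_card {q : ℕ} (hq : IsPrimePow q) (hqe : Even q)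
    (F : Type*) [Field F] [Fintype F] (hF : Fintype.card F = q)
    {m : ℕ} (hm : 2 ≤ m) :
    ∃ x : Matrix.symplecticGroup (Fin m) F, orderOf x = 2 ∧
      Nat.card (Subgroup.centralizer ({x} : Set (Matrix.symplecticGroup (Fin m) F))) =
        q ^ (2 * m - 1) * Nat.card (Matrix.symplecticGroup (Fin (m - 1)) F) :=
  Sp_transvection_centralizer_card_general hqe F hF hm
end

section
/- Let r be an odd prime, let n ≥ r + 2, and let x be an element of the alternating group A_n = alternatingGroup (Fin n) whose underlying permutation is a cycle of length r (i.e. an r-cycle fixing the remaining n − r points). Then 2 · |C_{A_n}(x)| = r · (n − r)!, i.e. the centralizer of x in A_n has cardinality r·(n−r)!/2. -/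
/-!
Inside `Perm (Fin n)` the centralizer of an `r`-cycle `c` is `⟨c⟩ × Sym(n - r)`, of order
`r · (n - r)!`. Since `n - r ≥ 2`, it contains a transposition of two fixed points of `c`, so
it is not contained in the index-two subgroup `A_n` and meets it in a subgroup of index two.
-/

open Equiv Equiv.Perm Subgroup

namespace Subgroup

variable {G : Type*} [Group G]

theorem centralizer_singleton_eq_subgroupOf (H : Subgroup G) (x : H) :
    centralizer {x} = (centralizer {(x : G)}).subgroupOf H := by
  ext y
  simp only [mem_centralizer_singleton_iff, mem_subgroupOf, Subtype.ext_iff, coe_mul]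

theorem card_subgroupOf_comm (H K : Subgroup G) :
    Nat.card (H.subgroupOf K) = Nat.card (K.subgroupOf H) := by
  rw [← inf_subgroupOf_right H K, ← inf_subgroupOf_left K H,
    Nat.card_congr (subgroupOfEquivOfLe inf_le_right).toEquiv,
    Nat.card_congr (subgroupOfEquivOfLe inf_le_left).toEquiv]

theorem relIndex_eq_two_of_index_eq_two {H K : Subgroup G} (hH : H.index = 2)
    (hK : ¬K ≤ H) : H.relIndex K = 2 := by
  have := normal_of_index_eq_two hH
  have hdvd : H.relIndex K ∣ 2 := hH ▸ relIndex_dvd_index_of_normal H K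
  exact ((Nat.dvd_prime Nat.prime_two).mp hdvd).resolve_left (mt relIndex_eq_one.mp hK)

theorem two_mul_card_centralizer_of_index_eq_two {H : Subgroup G} (hH : H.index = 2) (x : H)
    (hx : ¬centralizer {(x : G)} ≤ H) :
    2 * Nat.card (centralizer {x}) = Nat.card (centralizer {(x : G)}) := by
  rw [centralizer_singleton_eq_subgroupOf, card_subgroupOf_comm,
    ← relIndex_eq_two_of_index_eq_two hH hx, mul_comm]
  exact card_mul_index _

end Subgroup

namespace Equiv.Perm

variable {α : Type*} [Fintype α] [DecidableEq α]

theorem IsCycle.nat_card_centralizer {c : Perm α} (hc : c.IsCycle) :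
    Nat.card (centralizer {c}) =
      c.support.card * (Fintype.card α - c.support.card).factorial := by
  simp [Perm.nat_card_centralizer, hc.cycleType, mul_comm]

theorem not_centralizer_le_alternatingGroup {g : Perm α}
    (hg : g.support.card + 2 ≤ Fintype.card α) : ¬centralizer {g} ≤ alternatingGroup α := by
  intro h
  have := card_le_of_centralizer_le_alternating h
  rw [sum_cycleType] at this
  omega

end Equiv.Perm

theorem alternating_cycle_centralizer_card_general {r n : ℕ}
    (hn : r + 2 ≤ n) (x : alternatingGroup (Fin n))
    (hcyc : (x : Equiv.Perm (Fin n)).IsCycle)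
    (hsupp : (x : Equiv.Perm (Fin n)).support.card = r) :
    2 * Nat.card (Subgroup.centralizer ({x} : Set (alternatingGroup (Fin n)))) =
      r * Nat.factorial (n - r) := by
  have : Nontrivial (Fin n) := Fin.nontrivial_iff_two_le.mpr (by omega)
  have hx : ¬centralizer {(x : Perm (Fin n))} ≤ alternatingGroup (Fin n) :=
    not_centralizer_le_alternatingGroup (by rw [hsupp, Fintype.card_fin]; exact hn)
  rw [two_mul_card_centralizer_of_index_eq_two alternatingGroup.index_eq_two x hx,
    hcyc.nat_card_centralizer, hsupp, Fintype.card_fin]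

/-- Centralizer of an `r`-cycle in `A_n`: if `r` is an odd prime, `n ≥ r + 2`, and
`x ∈ A_n` is an `r`-cycle, then `2 · |C_{A_n}(x)| = r · (n - r)!`. -/
theorem alternating_cycle_centralizer_card {r n : ℕ} (hr : r.Prime) (hodd : Odd r)
    (hn : r + 2 ≤ n) (x : alternatingGroup (Fin n))
    (hcyc : (x : Equiv.Perm (Fin n)).IsCycle)
    (hsupp : (x : Equiv.Perm (Fin n)).support.card = r) :
    2 * Nat.card (Subgroup.centralizer ({x} : Set (alternatingGroup (Fin n)))) =
      r * Nat.factorial (n - r) :=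
  alternating_cycle_centralizer_card_general hn x hcyc hsupp
end

section
/- Let q = p^f ≥ 4 be a prime power, let F_q be a finite field with q elements, and let s be an odd prime dividing q^2 − 1. Then Sp_4(q) = Matrix.symplecticGroup (Fin 2) F_q contains an element of order p·s. -/
open Matrix

section Aux
variable {R : Type*} [CommRing R]

/-- 2×2 diagonal matrix. -/
def D2 (x y : R) : Matrix (Fin 2) (Fin 2) R := Matrix.diagonal ![x, y]

lemma D2_mul (x y z w : R) : D2 x y * D2 z w = D2 (x*z) (y*w) := by
  ext i j
  fin_cases i <;> fin_cases j <;>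
    simp [D2, Matrix.mul_apply, Fin.sum_univ_two, Matrix.diagonal]

lemma D2_add (x y z w : R) : D2 x y + D2 z w = D2 (x+z) (y+w) := by
  ext i j
  fin_cases i <;> fin_cases j <;> simp [D2, Matrix.diagonal]

lemma D2_one : (D2 1 1 : Matrix (Fin 2) (Fin 2) R) = 1 := by
  ext i j
  fin_cases i <;> fin_cases j <;> simp [D2, Matrix.diagonal, Matrix.one_apply]

/-- Interleaved block embedding of a pair of 2×2 matrices into 4×4 matrices. -/
def Phi (g h : Matrix (Fin 2) (Fin 2) R) : Matrix (Fin 2 ⊕ Fin 2) (Fin 2 ⊕ Fin 2) R :=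
  Matrix.fromBlocks (D2 (g 0 0) (h 0 0)) (D2 (g 0 1) (h 0 1))
    (D2 (g 1 0) (h 1 0)) (D2 (g 1 1) (h 1 1))

lemma Phi_one : Phi (1 : Matrix (Fin 2) (Fin 2) R) 1 = 1 := by
  have h00 : (1 : Matrix (Fin 2) (Fin 2) R) 0 0 = 1 := rfl
  have h01 : (1 : Matrix (Fin 2) (Fin 2) R) 0 1 = 0 := rfl
  have h10 : (1 : Matrix (Fin 2) (Fin 2) R) 1 0 = 0 := rfl
  have h11 : (1 : Matrix (Fin 2) (Fin 2) R) 1 1 = 1 := rfl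
  rw [Phi, h00, h01, h10, h11, D2_one]
  have : (D2 0 0 : Matrix (Fin 2) (Fin 2) R) = 0 := by
    ext i j; fin_cases i <;> fin_cases j <;> simp [D2, Matrix.diagonal]
  rw [this, Matrix.fromBlocks_one]

lemma Phi_mul (g h g' h' : Matrix (Fin 2) (Fin 2) R) :
    Phi g h * Phi g' h' = Phi (g*g') (h*h') := by
  have e : ∀ (a b : Matrix (Fin 2) (Fin 2) R) (i j : Fin 2),
      (a*b) i j = a i 0 * b 0 j + a i 1 * b 1 j := by
    intro a b i j; rw [Matrix.mul_apply, Fin.sum_univ_two]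
  simp only [Phi, Matrix.fromBlocks_multiply, D2_mul, D2_add, e]

lemma Phi_pow (g h : Matrix (Fin 2) (Fin 2) R) (n : ℕ) :
    (Phi g h)^n = Phi (g^n) (h^n) := by
  induction n with
  | zero => simpa using Phi_one.symm
  | succ n ih => rw [pow_succ, pow_succ, pow_succ, ih, Phi_mul]

lemma Phi_mem (g h : Matrix (Fin 2) (Fin 2) R)
    (hg : g 0 0 * g 1 1 - g 0 1 * g 1 0 = 1)
    (hh : h 0 0 * h 1 1 - h 0 1 * h 1 0 = 1) :
    Phi g h ∈ Matrix.symplecticGroup (Fin 2) R := by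
  rw [SymplecticGroup.mem_iff]
  ext i j
  rcases i with i | i <;> rcases j with j | j <;> fin_cases i <;> fin_cases j <;>
    simp [Phi, D2, Matrix.J, Matrix.mul_apply, Matrix.fromBlocks,
      Fintype.sum_sum_type, Fin.sum_univ_two, Matrix.diagonal] <;>
    first
      | ring1
      | linear_combination hg
      | linear_combination hh
      | linear_combination -hg
      | linear_combination -hh

lemma Phi_eq_one_01 {g h : Matrix (Fin 2) (Fin 2) R} (hΦ : Phi g h = 1) : g 0 1 = 0 := by
  have := congrFun (congrFun hΦ (Sum.inl 0)) (Sum.inr 0)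
  simpa [Phi, D2, Matrix.fromBlocks, Matrix.one_apply, Matrix.diagonal] using this

lemma Phi_eq_one_right {g h : Matrix (Fin 2) (Fin 2) R} (hΦ : Phi g h = 1) : h = 1 := by
  ext i j
  fin_cases i <;> fin_cases j
  · have := congrFun (congrFun hΦ (Sum.inl 1)) (Sum.inl 1)
    simpa [Phi, D2, Matrix.fromBlocks, Matrix.one_apply, Matrix.diagonal] using this
  · have := congrFun (congrFun hΦ (Sum.inl 1)) (Sum.inr 1)
    simpa [Phi, D2, Matrix.fromBlocks, Matrix.one_apply, Matrix.diagonal] using this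
  · have := congrFun (congrFun hΦ (Sum.inr 1)) (Sum.inl 1)
    simpa [Phi, D2, Matrix.fromBlocks, Matrix.one_apply, Matrix.diagonal] using this
  · have := congrFun (congrFun hΦ (Sum.inr 1)) (Sum.inr 1)
    simpa [Phi, D2, Matrix.fromBlocks, Matrix.one_apply, Matrix.diagonal] using this

lemma tmat_pow (n : ℕ) : (!![1,1;0,1] : Matrix (Fin 2) (Fin 2) R)^n = !![1,(n:R);0,1] := by
  induction n with
  | zero => simp [Matrix.one_fin_two]
  | succ n ih =>
      rw [pow_succ, ih]
      ext i j
      fin_cases i <;> fin_cases j <;>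
        simp [Matrix.mul_apply, Fin.sum_univ_two] <;> push_cast <;> ring

end Aux


/-- Adjacency claim from the proof of Proposition 3.6: for a prime power `q = p^f ≥ 4`
and an odd prime `s` dividing `q² - 1`, the group `Sp₄(q)` contains an element of
order `p · s`. -/
theorem Sp4_has_element_of_order_p_mul_s {p f q : ℕ} (hp : p.Prime) (hf : 0 < f)
    (hq : q = p ^ f) (hq4 : 4 ≤ q)
    (F : Type*) [Field F] [Fintype F] (hF : Fintype.card F = q)
    {s : ℕ} (hs : s.Prime) (hsodd : Odd s) (hsdvd : s ∣ q ^ 2 - 1) :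
    ∃ x : Matrix.symplecticGroup (Fin 2) F, orderOf x = p * s := by
  haveI := Fact.mk hs
  haveI : DecidableEq F := Classical.decEq F
  -- characteristic
  haveI hcharp : CharP F p := by
    haveI hr := ringChar.charP F
    obtain ⟨m, hrprime, hFcard⟩ := FiniteField.card F (ringChar F)
    have hpq : p ∣ Fintype.card F := by
      rw [hF, hq]; exact dvd_pow_self p hf.ne'
    have hpr : p = ringChar F := by
      rw [hFcard] at hpq
      exact (Nat.prime_dvd_prime_iff_eq hp hrprime).mp (hp.dvd_of_dvd_pow hpq)
    rwa [hpr]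
  have hq1 : 1 ≤ q := by omega
  have hfactor : q ^ 2 - 1 = (q - 1) * (q + 1) := by
    obtain ⟨m, rfl⟩ := Nat.exists_eq_add_of_le hq1
    have : (1 + m) ^ 2 = m * (m + 2) + 1 := by ring
    simp [this]
    omega
  have hpns : p ≠ s := by
    rintro rfl
    have h1 : p ∣ q ^ 2 := by rw [hq]; exact dvd_pow (dvd_pow_self p hf.ne') two_ne_zero
    have h2 : p ∣ q ^ 2 - (q ^ 2 - 1) := Nat.dvd_sub h1 hsdvd
    have : q ^ 2 - (q ^ 2 - 1) = 1 := by
      have : 1 ≤ q ^ 2 := Nat.one_le_pow _ _ (by omega)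
      omega
    rw [this] at h2
    exact hp.one_lt.ne' (Nat.dvd_one.mp h2)
  have hcardU : Fintype.card Fˣ = q - 1 := by rw [Fintype.card_units, hF]
  -- an element of order s inside SL₂
  obtain ⟨B, hBdet, hBs, hBne⟩ : ∃ B : Matrix (Fin 2) (Fin 2) F,
      (B 0 0 * B 1 1 - B 0 1 * B 1 0 = 1) ∧ B ^ s = 1 ∧ B ≠ 1 := by
    by_cases hcase : s ∣ q - 1
    · obtain ⟨u, hu⟩ := exists_prime_orderOf_dvd_card (G := Fˣ) s (hcardU ▸ hcase)
      refine ⟨Matrix.diagonal ![(u : F), ((u⁻¹ : Fˣ) : F)], ?_, ?_, ?_⟩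
      · simp [Matrix.diagonal]
      · have : Matrix.diagonal ![(u : F), ((u⁻¹ : Fˣ) : F)] ^ s
            = Matrix.diagonal (![(u : F), ((u⁻¹ : Fˣ) : F)] ^ s) := by
          rw [Matrix.diagonal_pow]
        rw [this]
        have h1 : (![(u : F), ((u⁻¹ : Fˣ) : F)] ^ s) = ![(u : F) ^ s, ((u⁻¹ : Fˣ) : F) ^ s] := by
          funext i; fin_cases i <;> simp [Pi.pow_apply]
        rw [h1]
        have h2 : (u : F) ^ s = 1 := by
          rw [← Units.val_pow_eq_pow_val, ← hu, pow_orderOf_eq_one, Units.val_one]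
        have h3 : ((u⁻¹ : Fˣ) : F) ^ s = 1 := by
          rw [← Units.val_pow_eq_pow_val, ← hu, inv_pow, pow_orderOf_eq_one, inv_one,
            Units.val_one]
        rw [h2, h3]
        ext i j; fin_cases i <;> fin_cases j <;> simp [Matrix.diagonal, Matrix.one_apply]
      · intro hcon
        have : (u : F) = 1 := by
          have := congrFun (congrFun hcon 0) 0
          simpa [Matrix.diagonal, Matrix.one_apply] using this
        have hu1 : u = 1 := Units.ext (by simpa using this)
        rw [hu1, orderOf_one] at hu
        exact hs.one_lt.ne' hu.symm
    · have hsq1 : s ∣ q + 1 := by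
        rcases (Nat.Prime.dvd_mul hs).mp (hfactor ▸ hsdvd) with h | h
        · exact absurd h hcase
        · exact h
      have hGL : s ∣ Fintype.card (GL (Fin 2) F) := by
        have hcard := Matrix.card_GL_field (𝔽 := F) 2
        rw [Nat.card_eq_fintype_card] at hcard
        rw [hcard, hF]
        have hprod : (∏ i : Fin 2, (q ^ 2 - q ^ (i : ℕ))) = (q ^ 2 - 1) * (q ^ 2 - q) := by
          rw [Fin.prod_univ_two]; norm_num
        rw [hprod]
        exact dvd_mul_of_dvd_left hsdvd _
      obtain ⟨u, hu⟩ := exists_prime_orderOf_dvd_card (G := GL (Fin 2) F) s hGL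
      have hdet : Matrix.det (u : Matrix (Fin 2) (Fin 2) F) = 1 := by
        set d := Matrix.GeneralLinearGroup.det u with hd
        have h1 : orderOf d ∣ s := hu ▸ orderOf_map_dvd _ u
        have h2 : orderOf d ∣ q - 1 := hcardU ▸ orderOf_dvd_card
        rcases (Nat.dvd_prime hs).mp h1 with h | h
        · have : d = 1 := orderOf_eq_one_iff.mp h
          have := congrArg Units.val this
          rwa [Matrix.GeneralLinearGroup.val_det_apply, Units.val_one] at this
        · exact absurd (h ▸ h2) hcase
      refine ⟨(u : Matrix (Fin 2) (Fin 2) F), ?_, ?_, ?_⟩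
      · rw [← Matrix.det_fin_two]; exact hdet
      · rw [← Units.val_pow_eq_pow_val, ← hu, pow_orderOf_eq_one, Units.val_one]
      · intro hcon
        have hu1 : u = 1 := Units.ext (by simpa using hcon)
        rw [hu1, orderOf_one] at hu
        exact hs.one_lt.ne' hu.symm
  -- the transvection
  set T : Matrix (Fin 2) (Fin 2) F := !![1,1;0,1] with hT
  have hTdet : T 0 0 * T 1 1 - T 0 1 * T 1 0 = 1 := by simp [hT]
  have hTp : T ^ p = 1 := by
    rw [hT, tmat_pow, CharP.cast_eq_zero F p, ← Matrix.one_fin_two]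
  -- the symplectic element
  have hmem := Phi_mem T B hTdet hBdet
  refine ⟨⟨Phi T B, hmem⟩, ?_⟩
  set z : Matrix.symplecticGroup (Fin 2) F := ⟨Phi T B, hmem⟩ with hz
  have hcoe : ∀ n : ℕ, ((z ^ n : Matrix.symplecticGroup (Fin 2) F) : Matrix _ _ F)
      = Phi (T ^ n) (B ^ n) := by
    intro n
    rw [SubmonoidClass.coe_pow]
    exact Phi_pow T B n
  have hps : z ^ (p * s) = 1 := by
    apply Subtype.ext
    rw [hcoe, pow_mul T, hTp, one_pow, mul_comm p s, pow_mul B, hBs, one_pow, Phi_one]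
    rfl
  have hdvd1 : orderOf z ∣ p * s := orderOf_dvd_of_pow_eq_one hps
  have hzn : Phi (T ^ orderOf z) (B ^ orderOf z) = 1 := by
    have h1 := pow_orderOf_eq_one z
    have h2 := congrArg Subtype.val h1
    rwa [hcoe] at h2
  have hpn : p ∣ orderOf z := by
    have h01 := Phi_eq_one_01 hzn
    rw [hT, tmat_pow] at h01
    have : ((orderOf z : ℕ) : F) = 0 := by simpa using h01
    exact (CharP.cast_eq_zero_iff F p _).mp this
  have hsn : s ∣ orderOf z := by
    have hBn : B ^ orderOf z = 1 := Phi_eq_one_right hzn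
    have hOB : orderOf B = s := orderOf_eq_prime hBs hBne
    exact hOB ▸ orderOf_dvd_of_pow_eq_one hBn
  have hcop : Nat.Coprime p s := (Nat.coprime_primes hp hs).mpr hpns
  exact Nat.dvd_antisymm hdvd1 (Nat.Coprime.mul_dvd_of_dvd_of_dvd hcop hpn hsn)
end
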